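/- arXiv:math/0205020 — 9 statements merged into one kernel-verified Lean document; each statement's English description precedes it below -/
import Mathlib

section
/- Let (M_n) be a weight sequence. Then sup_n n^2 M_{n-1} / M_n < ∞ if and only if there exist positive constants B and D such that for all m ≤ n one has (M_m / m!) * (n! / M_n) ≤ B * (D/m)^{n-m}. -/
theorem weight_seq_sup_iff
    (M : ℕ → ℝ) (hpos : ∀ n, 0 < M n) (hM0 : M 0 = 1)
    (hbin : ∀ n m : ℕ, (((n + m).choose n : ℕ) : ℝ) * M n * M m ≤ M (n + m)) :
    (∃ K : ℝ, ∀ n : ℕ, 1 ≤ n → (n : ℝ) ^ 2 * M (n - 1) / M n ≤ K) ↔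
    (∃ B D : ℝ, 0 < B ∧ 0 < D ∧ ∀ m n : ℕ, 1 ≤ m → m ≤ n →
      (M m / m.factorial) * (n.factorial / M n) ≤ B * (D / m) ^ (n - m)) := by
  constructor
  · rintro ⟨K, hK⟩
    have h1 := hK 1 le_rfl
    simp only [Nat.cast_one, one_pow, one_mul] at h1
    rw [show (1:ℕ) - 1 = 0 from rfl, hM0] at h1
    have hK0 : 0 < K := lt_of_lt_of_le (div_pos one_pos (hpos 1)) h1
    refine ⟨1, K, one_pos, hK0, ?_⟩
    intro m n hm hmn
    induction n, hmn using Nat.le_induction with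
    | base =>
      have : (M m / m.factorial) * (m.factorial / M m) = 1 := by
        have h1 : (M m) ≠ 0 := (hpos m).ne'
        have h2 : ((m.factorial : ℝ)) ≠ 0 := by positivity
        field_simp
      rw [this]; simp
    | succ n hn ih =>
      have hmpos : (0:ℝ) < m := by exact_mod_cast hm
      have hfac : ((n+1).factorial : ℝ) = ((n:ℝ)+1) * n.factorial := by
        push_cast [Nat.factorial_succ]; ring
      have hsub : n + 1 - m = (n - m) + 1 := by omega
      have hkey : ((n:ℝ)+1) * M n / M (n+1) ≤ K / m := by
        have h2 := hK (n+1) (by omega)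
        rw [show n + 1 - 1 = n from rfl] at h2
        push_cast at h2
        have hmn1 : (m:ℝ) ≤ (n:ℝ)+1 := by exact_mod_cast Nat.le_succ_of_le hn
        have hn1 : (0:ℝ) < (n:ℝ)+1 := by positivity
        rw [div_le_iff₀ (hpos _)] at h2
        have hstep : ((n:ℝ)+1) * M n / M (n+1) ≤ K / ((n:ℝ)+1) := by
          rw [div_le_div_iff₀ (hpos _) hn1]
          nlinarith [hpos (n+1), hpos n]
        exact hstep.trans (div_le_div_of_nonneg_left hK0.le hmpos hmn1)
      calc M m / m.factorial * ((n+1).factorial / M (n+1))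
          = (M m / m.factorial * (n.factorial / M n)) * (((n:ℝ)+1) * M n / M (n+1)) := by
            rw [hfac]
            field_simp [(hpos n).ne', (hpos (n+1)).ne']
        _ ≤ (K/m)^(n-m) * (K/m) := by
            exact mul_le_mul (by simpa using ih) hkey
              (le_of_lt (div_pos (mul_pos (by positivity) (hpos n)) (hpos _)))
              (by positivity)
        _ = 1 * (K/m)^(n+1-m) := by rw [hsub, pow_succ, one_mul]
  · rintro ⟨B, D, hB, hD, h⟩
    refine ⟨max (2*B*D) (1/M 1), ?_⟩
    intro n hn
    rcases eq_or_lt_of_le hn with h1 | h2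
    · rw [← h1]
      simp only [Nat.cast_one, one_pow, one_mul, show (1:ℕ)-1 = 0 from rfl, hM0]
      exact le_max_right _ _
    · -- n ≥ 2
      have hn2 : 2 ≤ n := h2
      have key := h (n-1) n (by omega) (by omega)
      rw [show n - (n-1) = 1 from by omega, pow_one] at key
      have hfac : (n.factorial : ℝ) = (n:ℝ) * (n-1).factorial := by
        rw [show n = (n-1) + 1 from by omega, Nat.factorial_succ]
        push_cast [show n - 1 + 1 = n from by omega]
        ring
      have hcast : (((n-1:ℕ)):ℝ) = (n:ℝ) - 1 := by
        push_cast [Nat.cast_sub hn]; ring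
      rw [hfac, hcast] at key
      have hn1 : (0:ℝ) < (n:ℝ) - 1 := by
        have : (2:ℝ) ≤ n := by exact_mod_cast hn2
        linarith
      have hMn : (0:ℝ) < M n := hpos n
      have hMn1 : (0:ℝ) < M (n-1) := hpos (n-1)
      have hfpos : (0:ℝ) < ((n-1).factorial : ℝ) := by positivity
      -- key : M (n-1) / (n-1)! * ((n * (n-1)!) / M n) ≤ B * (D / (n-1))
      have key2 : (n:ℝ) * (M (n-1) / M n) ≤ B * D / ((n:ℝ)-1) := by
        have : M (n-1) / ((n-1).factorial : ℝ) * ((n:ℝ) * (n-1).factorial / M n)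
            = (n:ℝ) * (M (n-1) / M n) := by
          field_simp
        rw [this] at key
        rw [mul_div_assoc]
        exact key
      have h2n : (2:ℝ) ≤ (n:ℝ) := by exact_mod_cast hn2
      have : (n:ℝ)^2 * M (n-1) / M n ≤ (n:ℝ) * (B*D/((n:ℝ)-1)) := by
        have := mul_le_mul_of_nonneg_left key2 (by positivity : (0:ℝ) ≤ (n:ℝ))
        calc (n:ℝ)^2 * M (n-1) / M n = (n:ℝ) * ((n:ℝ) * (M (n-1) / M n)) := by ring
          _ ≤ _ := this
      refine this.trans (le_trans ?_ (le_max_left _ _))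
      rw [mul_div_assoc', div_le_iff₀ hn1]
      nlinarith [mul_pos hB hD]
end

section
/- Let (M_n) be a weight sequence such that the sum over n of M_n/M_{n+1} converges. Then lim_{n→∞} (n!/M_n)^{1/n} = 0, i.e. every non-quasi-analytic weight sequence is non-analytic. -/
/-!
Write `c k = M k / M (k + 1)`, so that `M m / M n = ∏_{m ≤ k < n} c k`. Choose `m` with
`∑_{k ≥ m} c k ≤ ε`; by AM-GM the product of the `N = n - m` numbers `c k` is at most
`(ε / N) ^ N`. Together with `n! ≤ n ^ m * N ^ N` this gives
`n! / M n ≤ n ^ m * ε ^ N / M m`, which is eventually below `(2 ε) ^ n`.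
-/

open Filter Finset Topology
open scoped Nat

theorem Real.prod_le_sum_div_card_pow {ι : Type*} (s : Finset ι) (f : ι → ℝ)
    (hf : ∀ i ∈ s, 0 ≤ f i) : ∏ i ∈ s, f i ≤ ((∑ i ∈ s, f i) / #s) ^ #s := by
  rcases s.eq_empty_or_nonempty with rfl | hs
  · simp
  have hcard : (#s : ℝ) ≠ 0 := by exact_mod_cast hs.card_pos.ne'
  have amgm := Real.geom_mean_le_arith_mean s (fun _ => 1) f (fun _ _ => zero_le_one)
    (by simpa using hs.card_pos) hf
  simp only [Real.rpow_one, sum_const, nsmul_eq_mul, mul_one, one_mul] at amgm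
  calc ∏ i ∈ s, f i = ((∏ i ∈ s, f i) ^ (#s : ℝ)⁻¹) ^ #s :=
        (Real.rpow_inv_natCast_pow (prod_nonneg hf) (by exact_mod_cast hcard)).symm
    _ ≤ ((∑ i ∈ s, f i) / #s) ^ #s := by
      gcongr
      exact Real.rpow_nonneg (prod_nonneg hf) _

theorem Nat.factorial_le_pow_mul_sub_pow {m n : ℕ} (hmn : m ≤ n) :
    n ! ≤ n ^ m * (n - m) ^ (n - m) := by
  rw [← Nat.factorial_mul_descFactorial hmn, mul_comm]
  exact Nat.mul_le_mul (Nat.descFactorial_le_pow n m) (Nat.factorial_le_pow _)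

theorem div_eq_prod_Ico_div_succ {K : Type*} [Field K] {M : ℕ → K} (hM : ∀ n, M n ≠ 0)
    {m n : ℕ} (hmn : m ≤ n) :
    M m / M n = ∏ k ∈ Ico m n, M k / M (k + 1) := by
  induction n, hmn using Nat.le_induction with
  | base => simp [hM m]
  | succ n hmn ih =>
    rw [prod_Ico_succ_top hmn, ← ih]
    field_simp [hM n]

theorem exists_sum_Ico_le_of_summable {c : ℕ → ℝ} (hc : ∀ n, 0 ≤ c n) (hsum : Summable c)
    {ε : ℝ} (hε : 0 < ε) : ∃ m, ∀ n, m ≤ n → ∑ k ∈ Ico m n, c k ≤ ε := by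
  obtain ⟨m, hm⟩ := ((hsum.tendsto_sum_tsum_nat.const_sub (∑' k, c k)).eventually
    (ge_mem_nhds (by simpa using hε))).exists
  refine ⟨m, fun n hmn => ?_⟩
  rw [sum_Ico_eq_sub _ hmn]
  linarith [hsum.sum_le_tsum (range n) (fun k _ => hc k)]

theorem factorial_div_le_of_sum_Ico_le {M : ℕ → ℝ} (hpos : ∀ n, 0 < M n) {m n : ℕ}
    (hmn : m ≤ n) {ε : ℝ} (hε : ∑ k ∈ Ico m n, M k / M (k + 1) ≤ ε) :
    (n ! : ℝ) / M n ≤ n ^ m * ε ^ (n - m) / M m := by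
  have hratio_nonneg : ∀ k, 0 ≤ M k / M (k + 1) := fun k => (div_pos (hpos k) (hpos _)).le
  have hcard : #(Ico m n) = n - m := Nat.card_Ico m n
  have hprod : M m / M n ≤ (ε / (n - m : ℕ)) ^ (n - m) := by
    rw [div_eq_prod_Ico_div_succ (fun k => (hpos k).ne') hmn, ← hcard]
    refine (Real.prod_le_sum_div_card_pow _ _ fun k _ => hratio_nonneg k).trans ?_
    gcongr
    exact div_nonneg (sum_nonneg fun k _ => hratio_nonneg k) (Nat.cast_nonneg _)
  have hpow : ((n - m : ℕ) : ℝ) ^ (n - m) * (ε / (n - m : ℕ)) ^ (n - m) = ε ^ (n - m) := by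
    rcases Nat.eq_zero_or_pos (n - m) with h | h
    · simp [h]
    · rw [← mul_pow, mul_div_cancel₀ _ (by positivity)]
  have hfact : (n ! : ℝ) ≤ n ^ m * ((n - m : ℕ) : ℝ) ^ (n - m) := by
    exact_mod_cast Nat.factorial_le_pow_mul_sub_pow hmn
  have hMm := hpos m
  have hMn := hpos n
  calc (n ! : ℝ) / M n = n ! * (M m / M n) / M m := by field_simp
    _ ≤ n ^ m * ((n - m : ℕ) : ℝ) ^ (n - m) * (ε / (n - m : ℕ)) ^ (n - m) / M m := by
      gcongr
    _ = n ^ m * ε ^ (n - m) / M m := by rw [mul_assoc, hpow]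

theorem eventually_factorial_div_lt_pow {M : ℕ → ℝ} (hpos : ∀ n, 0 < M n)
    (hsum : Summable fun n => M n / M (n + 1)) {δ : ℝ} (hδ : 0 < δ) :
    ∀ᶠ n in atTop, (n ! : ℝ) / M n < δ ^ n := by
  set ε := δ / 2
  have hε : 0 < ε := half_pos hδ
  obtain ⟨m, hm⟩ := exists_sum_Ico_le_of_summable (fun n => (div_pos (hpos n) (hpos _)).le)
    hsum hε
  have hMm := hpos m
  have hsmall : ∀ᶠ n : ℕ in atTop, (n : ℝ) ^ m * (1 / 2) ^ n < M m * ε ^ m :=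
    (tendsto_pow_const_mul_const_pow_of_lt_one m (by norm_num) (by norm_num)).eventually_lt_const
      (by positivity)
  filter_upwards [hsmall, eventually_ge_atTop m] with n hn hmn
  have hεpow : ε ^ (n - m) * ε ^ m = (1 / 2) ^ n * δ ^ n := by
    rw [← pow_add, Nat.sub_add_cancel hmn, ← mul_pow]
    ring
  calc (n ! : ℝ) / M n ≤ n ^ m * ε ^ (n - m) / M m :=
        factorial_div_le_of_sum_Ico_le hpos hmn (hm n hmn)
    _ = (n ^ m * (1 / 2) ^ n) / (M m * ε ^ m) * δ ^ n := by
      field_simp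
      rw [mul_assoc, hεpow]
      ring
    _ < δ ^ n := mul_lt_of_lt_one_left (pow_pos hδ n) ((div_lt_one (by positivity)).2 hn)

theorem tendsto_rpow_one_div_of_eventually_lt_pow {f : ℕ → ℝ} (hf : ∀ n, 0 ≤ f n)
    (h : ∀ δ > 0, ∀ᶠ n in atTop, f n < δ ^ n) :
    Tendsto (fun n : ℕ => f n ^ ((1 : ℝ) / n)) atTop (𝓝 0) := by
  refine tendsto_order.2 ⟨fun a ha => Eventually.of_forall fun n =>
    ha.trans_le (Real.rpow_nonneg (hf n) _), fun δ hδ => ?_⟩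
  filter_upwards [h δ hδ, eventually_ne_atTop 0] with n hn hn0
  calc f n ^ ((1 : ℝ) / n) < (δ ^ n) ^ ((1 : ℝ) / n) :=
        Real.rpow_lt_rpow (hf n) hn (by positivity)
    _ = δ := by rw [one_div, Real.pow_rpow_inv_natCast hδ.le hn0]

theorem non_quasi_analytic_implies_non_analytic_general
    (M : ℕ → ℝ) (hpos : ∀ n, 0 < M n)
    (hsum : Summable fun n : ℕ => M n / M (n + 1)) :
    Filter.Tendsto (fun n : ℕ => ((n.factorial : ℝ) / M n) ^ ((1 : ℝ) / n))
      Filter.atTop (nhds 0) :=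
  tendsto_rpow_one_div_of_eventually_lt_pow (fun n => div_nonneg (Nat.cast_nonneg _) (hpos n).le)
    fun _ hδ => eventually_factorial_div_lt_pow hpos hsum hδ

theorem non_quasi_analytic_implies_non_analytic
    (M : ℕ → ℝ) (hpos : ∀ n, 0 < M n) (hM0 : M 0 = 1)
    (hbin : ∀ n m : ℕ, (((n + m).choose n : ℕ) : ℝ) * M n * M m ≤ M (n + m))
    (hsum : Summable fun n : ℕ => M n / M (n + 1)) :
    Filter.Tendsto (fun n : ℕ => ((n.factorial : ℝ) / M n) ^ ((1 : ℝ) / n))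
      Filter.atTop (nhds 0) :=
  non_quasi_analytic_implies_non_analytic_general M hpos hsum
end

section
/- Let (M_n) be a weight sequence, φ : [0,1] → [0,1] infinitely differentiable with φ(x₀) = x₀, and f : [0,1] → ℝ infinitely differentiable with f(φ(x)) = λ f(x) for all x ∈ [0,1], where λ is a real number with λ ≠ 0, λ ≠ 1 and λ ≠ (φ'(x₀))^n for all positive integers n. Then f^{(m)}(x₀) = 0 for all nonnegative integers m. -/
open Set Finset

private lemma one_le_top' : ((⊤ : ℕ∞) : WithTop ℕ∞) ≠ 0 := by
  simp

private lemma vanish_iterated {g : ℝ → ℝ} (hg : ContDiff ℝ (⊤ : ℕ∞) g)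
    (h0 : ∀ x ∈ Set.Icc (0:ℝ) 1, g x = 0) :
    ∀ n : ℕ, ∀ x ∈ Set.Icc (0:ℝ) 1, iteratedDeriv n g x = 0 := by
  intro n
  induction n with
  | zero => simpa using h0
  | succ n ih =>
    intro x hx
    rw [iteratedDeriv_succ]
    have hdiff : DifferentiableAt ℝ (iteratedDeriv n g) x := by
      have : ContDiff ℝ (⊤ : ℕ∞) (iteratedDeriv n g) := by
        rw [iteratedDeriv_eq_iterate]
        exact hg.iterate_deriv n
      exact (this.differentiable one_le_top').differentiableAt
    have hu : UniqueDiffWithinAt ℝ (Set.Icc (0:ℝ) 1) x :=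
      (uniqueDiffOn_Icc one_pos) x hx
    rw [← hdiff.derivWithin hu]
    have : derivWithin (iteratedDeriv n g) (Set.Icc (0:ℝ) 1) x
        = derivWithin (fun _ => (0:ℝ)) (Set.Icc (0:ℝ) 1) x :=
      derivWithin_congr (fun y hy => ih y hy) (ih x hx)
    rw [this]; simp

private lemma comb_iterated (c : ℝ) :
    ∀ (n : ℕ) (u v : ℝ → ℝ), ContDiff ℝ (⊤ : ℕ∞) u → ContDiff ℝ (⊤ : ℕ∞) v →
    iteratedDeriv n (fun x => u x - c * v x)
      = fun x => iteratedDeriv n u x - c * iteratedDeriv n v x := by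
  intro n
  induction n with
  | zero => intro u v _ _; simp [iteratedDeriv_zero]
  | succ n ih =>
    intro u v hu hv
    have hd : deriv (fun x => u x - c * v x) = fun x => deriv u x - c * deriv v x := by
      funext x
      rw [deriv_fun_sub (hu.differentiable one_le_top' x)
        (((hv.differentiable one_le_top' x)).const_mul c),
        deriv_const_mul c (hv.differentiable one_le_top' x)]
    rw [iteratedDeriv_succ', hd,
      ih (deriv u) (deriv v) (contDiff_infty_iff_deriv.mp hu).2
        (contDiff_infty_iff_deriv.mp hv).2,
      show iteratedDeriv (n+1) u = iteratedDeriv n (deriv u) from iteratedDeriv_succ',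
      show iteratedDeriv (n+1) v = iteratedDeriv n (deriv v) from iteratedDeriv_succ']

private lemma faa_lite (φ f : ℝ → ℝ) (hφ : ContDiff ℝ (⊤ : ℕ∞) φ)
    (hf : ContDiff ℝ (⊤ : ℕ∞) f) (n : ℕ) :
    ∃ h : ℕ → ℝ → ℝ, (∀ k, ContDiff ℝ (⊤ : ℕ∞) (h k)) ∧
      (∀ x, h n x = (deriv φ x) ^ n) ∧
      ∀ x, iteratedDeriv n (fun y => f (φ y)) x =
        ∑ k ∈ Finset.range (n+1), iteratedDeriv k f (φ x) * h k x := by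
  induction n with
  | zero =>
    exact ⟨fun _ _ => 1, fun _ => contDiff_const, fun x => by simp, fun x => by simp⟩
  | succ n IH =>
    obtain ⟨h, hsm, htop, hrep⟩ := IH
    have hφd : Differentiable ℝ φ := hφ.differentiable one_le_top'
    have hitf : ∀ k, ContDiff ℝ (⊤ : ℕ∞) (iteratedDeriv k f) := by
      intro k; rw [iteratedDeriv_eq_iterate]; exact hf.iterate_deriv k
    refine ⟨fun j x => (if j ≤ n then deriv (h j) x else 0) +
        (if j = 0 then 0 else deriv φ x * h (j-1) x), ?_, ?_, ?_⟩
    · intro k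
      apply ContDiff.add
      · by_cases hk : k ≤ n
        · simp only [hk, if_true]
          exact (contDiff_infty_iff_deriv.mp (hsm k)).2
        · simp only [hk, if_false]; exact contDiff_const
      · by_cases hk : k = 0
        · simp only [hk, if_true]; exact contDiff_const
        · simp only [hk, if_false]
          exact ((contDiff_infty_iff_deriv.mp hφ).2).mul (hsm (k-1))
    · intro x
      beta_reduce
      rw [if_neg (by omega), if_neg (Nat.succ_ne_zero n), zero_add,
        Nat.add_sub_cancel, htop x, pow_succ]
      ring
    · intro x
      beta_reduce
      rw [iteratedDeriv_succ]
      have hrep' : iteratedDeriv n (fun y => f (φ y)) =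
          fun x => ∑ k ∈ Finset.range (n+1), iteratedDeriv k f (φ x) * h k x :=
        funext hrep
      rw [hrep']
      have hterm : ∀ k, HasDerivAt (fun x => iteratedDeriv k f (φ x) * h k x)
          (iteratedDeriv (k+1) f (φ x) * deriv φ x * h k x
            + iteratedDeriv k f (φ x) * deriv (h k) x) x := by
        intro k
        have h1 : HasDerivAt (fun x => iteratedDeriv k f (φ x))
            (iteratedDeriv (k+1) f (φ x) * deriv φ x) x := by
          have hdf : HasDerivAt (iteratedDeriv k f) (iteratedDeriv (k+1) f (φ x)) (φ x) := by
            have hda : DifferentiableAt ℝ (iteratedDeriv k f) (φ x) :=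
              ((hitf k).differentiable one_le_top' (φ x))
            have := hda.hasDerivAt
            rwa [show deriv (iteratedDeriv k f) (φ x) = iteratedDeriv (k+1) f (φ x) from
              (congrFun iteratedDeriv_succ (φ x)).symm] at this
          exact hdf.comp x (hφd x).hasDerivAt
        have h2 : HasDerivAt (h k) (deriv (h k) x) x :=
          ((hsm k).differentiable one_le_top' x).hasDerivAt
        exact h1.mul h2
      have hsum : HasDerivAt (fun x => ∑ k ∈ Finset.range (n+1),
            iteratedDeriv k f (φ x) * h k x)
          (∑ k ∈ Finset.range (n+1),
            (iteratedDeriv (k+1) f (φ x) * deriv φ x * h k x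
              + iteratedDeriv k f (φ x) * deriv (h k) x)) x :=
        HasDerivAt.fun_sum (fun k _ => hterm k)
      rw [hsum.deriv, Finset.sum_add_distrib]
      have e1 : ∑ j ∈ Finset.range (n+1+1),
          iteratedDeriv j f (φ x) * (if j ≤ n then deriv (h j) x else 0)
          = ∑ k ∈ Finset.range (n+1), iteratedDeriv k f (φ x) * deriv (h k) x := by
        rw [Finset.sum_range_succ, if_neg (by omega), mul_zero, add_zero]
        refine Finset.sum_congr rfl fun j hj => ?_
        rw [if_pos (by simpa [Nat.lt_succ_iff] using Finset.mem_range.mp hj)]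
      have e2 : ∑ j ∈ Finset.range (n+1+1),
          iteratedDeriv j f (φ x) * (if j = 0 then 0 else deriv φ x * h (j-1) x)
          = ∑ k ∈ Finset.range (n+1),
            iteratedDeriv (k+1) f (φ x) * deriv φ x * h k x := by
        rw [Finset.sum_range_succ']
        simp only [Nat.succ_ne_zero, if_false, if_true, reduceIte, mul_zero, add_zero,
          Nat.add_sub_cancel]
        exact Finset.sum_congr rfl fun j _ => by ring
      calc ∑ k ∈ Finset.range (n+1), iteratedDeriv (k+1) f (φ x) * deriv φ x * h k x
            + ∑ k ∈ Finset.range (n+1), iteratedDeriv k f (φ x) * deriv (h k) x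
          = ∑ j ∈ Finset.range (n+1+1),
              iteratedDeriv j f (φ x) * (if j ≤ n then deriv (h j) x else 0)
            + ∑ j ∈ Finset.range (n+1+1),
              iteratedDeriv j f (φ x) * (if j = 0 then 0 else deriv φ x * h (j-1) x) := by
            rw [e1, e2]; ring
        _ = ∑ j ∈ Finset.range (n+1+1), iteratedDeriv j f (φ x) *
              ((if j ≤ n then deriv (h j) x else 0)
                + (if j = 0 then 0 else deriv φ x * h (j-1) x)) := by
            rw [← Finset.sum_add_distrib]
            exact Finset.sum_congr rfl fun j _ => by ring

theorem eigenfunction_derivatives_vanish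
    (M : ℕ → ℝ) (hpos : ∀ n, 0 < M n) (hM0 : M 0 = 1)
    (hbin : ∀ n m : ℕ, (((n + m).choose n : ℕ) : ℝ) * M n * M m ≤ M (n + m))
    (φ f : ℝ → ℝ) (hφ : ContDiff ℝ (⊤ : ℕ∞) φ)
    (hmap : Set.MapsTo φ (Set.Icc 0 1) (Set.Icc 0 1))
    (hf : ContDiff ℝ (⊤ : ℕ∞) f)
    (x₀ : ℝ) (hx₀ : x₀ ∈ Set.Icc (0 : ℝ) 1) (hfix : φ x₀ = x₀)
    (lam : ℝ)
    (heq : ∀ x ∈ Set.Icc (0 : ℝ) 1, f (φ x) = lam * f x)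
    (hlam0 : lam ≠ 0) (hlam1 : lam ≠ 1)
    (hlamn : ∀ n : ℕ, 1 ≤ n → lam ≠ (deriv φ x₀) ^ n) :
    ∀ m : ℕ, iteratedDeriv m f x₀ = 0 := by
  have hφ' : ContDiff ℝ (⊤ : ℕ∞) φ := hφ.of_le (by simp)
  have hf' : ContDiff ℝ (⊤ : ℕ∞) f := hf.of_le (by simp)
  have hcomp : ContDiff ℝ (⊤ : ℕ∞) (fun y => f (φ y)) := hf'.comp hφ'
  -- the key equation for each n
  have key : ∀ n : ℕ, iteratedDeriv n (fun y => f (φ y)) x₀ = lam * iteratedDeriv n f x₀ := by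
    intro n
    have hg : ContDiff ℝ (⊤ : ℕ∞) (fun x => f (φ x) - lam * f x) :=
      hcomp.sub (contDiff_const.mul hf')
    have h0 : ∀ x ∈ Set.Icc (0:ℝ) 1, f (φ x) - lam * f x = 0 := by
      intro x hx; rw [heq x hx]; ring
    have := vanish_iterated hg h0 n x₀ hx₀
    rw [comb_iterated lam n (fun y => f (φ y)) f hcomp hf'] at this
    have h2 : iteratedDeriv n (fun y => f (φ y)) x₀ - lam * iteratedDeriv n f x₀ = 0 := this
    linarith
  intro m
  induction m using Nat.strong_induction_on with
  | _ n ih =>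
    obtain ⟨h, _, htop, hrep⟩ := faa_lite φ f hφ' hf' n
    have hk := key n
    rw [hrep x₀, Finset.sum_range_succ, hfix] at hk
    have hzero : ∑ k ∈ Finset.range n, iteratedDeriv k f x₀ * h k x₀ = 0 :=
      Finset.sum_eq_zero fun k hkk => by
        rw [ih k (Finset.mem_range.mp hkk), zero_mul]
    rw [hzero, zero_add, htop x₀] at hk
    have hfac : iteratedDeriv n f x₀ * ((deriv φ x₀) ^ n - lam) = 0 := by
      linear_combination hk
    rcases mul_eq_zero.mp hfac with h' | h'
    · exact h'
    · exfalso
      have hl : lam = (deriv φ x₀) ^ n := by linarith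
      rcases Nat.eq_zero_or_pos n with hn | hn
      · subst hn; rw [pow_zero] at hl; exact hlam1 hl
      · exact hlamn n hn hl
end

section
/- Let φ : [0,1] → [0,1] be infinitely differentiable with φ(x₀) = x₀ and φ'(x₀) ≠ 0, and let p be a positive integer. Suppose f : [0,1] → ℝ is infinitely differentiable and satisfies f(φ(x)) = (φ'(x₀))^p f(x) for all x ∈ [0,1], with |φ'(x₀)| < 1. Then f^{(ν)}(x₀) = 0 for ν = 0, 1, ..., p−1. -/
open Finset Set
open scoped ContDiff

lemma one_le_inf' : (1 : WithTop ℕ∞) ≤ ∞ := by exact_mod_cast le_top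
lemma nat_le_inf' (n : ℕ) : ((n : ℕ∞) : WithTop ℕ∞) ≤ ∞ := by exact_mod_cast le_top

lemma zero_on_Icc_iteratedDeriv (g : ℝ → ℝ) (hg : ContDiff ℝ ∞ g)
    (h0 : ∀ x ∈ Set.Icc (0:ℝ) 1, g x = 0) :
    ∀ n, ∀ x ∈ Set.Icc (0:ℝ) 1, iteratedDeriv n g x = 0 := by
  intro n
  induction n with
  | zero => simpa using h0
  | succ n ih =>
    intro x hx
    have hgn : ContDiff ℝ ∞ (iteratedDeriv n g) := by
      rw [iteratedDeriv_eq_iterate]; exact hg.iterate_deriv n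
    have hdiff : DifferentiableAt ℝ (iteratedDeriv n g) x :=
      (hgn.differentiable (by simp)).differentiableAt
    have hu : UniqueDiffWithinAt ℝ (Set.Icc (0:ℝ) 1) x :=
      (uniqueDiffOn_Icc one_pos) x hx
    rw [iteratedDeriv_succ, ← hdiff.derivWithin hu,
      derivWithin_congr (fun y hy => ih y hy) (ih x hx)]
    simp

lemma comp_iteratedDeriv_expansion (φ f : ℝ → ℝ)
    (hφ : ContDiff ℝ ∞ φ) (hf : ContDiff ℝ ∞ f) (n : ℕ) :
    ∃ a : ℕ → ℝ → ℝ, (∀ k, ContDiff ℝ ∞ (a k)) ∧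
      (∀ x, a n x = (deriv φ x) ^ n) ∧
      ∀ x, iteratedDeriv n (f ∘ φ) x
        = ∑ k ∈ Finset.range (n+1), a k x * iteratedDeriv k f (φ x) := by
  have hitf : ∀ k, ContDiff ℝ ∞ (iteratedDeriv k f) := by
    intro k; rw [iteratedDeriv_eq_iterate]; exact hf.iterate_deriv k
  have hdφ : ContDiff ℝ ∞ (deriv φ) := (contDiff_infty_iff_deriv.mp hφ).2
  induction n with
  | zero =>
    refine ⟨fun k => if k = 0 then (fun _ => 1) else (fun _ => 0), ?_, ?_, ?_⟩
    · intro k; dsimp only; split <;> exact contDiff_const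
    · simp
    · simp
  | succ n ih =>
    obtain ⟨a, ha, han, hsum⟩ := ih
    have hda : ∀ k, ContDiff ℝ ∞ (deriv (a k)) :=
      fun k => (contDiff_infty_iff_deriv.mp (ha k)).2
    refine ⟨fun k x => (if k ≤ n then deriv (a k) x else 0)
        + (if k = 0 then 0 else a (k-1) x * deriv φ x), ?_, ?_, ?_⟩
    · intro k; dsimp only
      apply ContDiff.add
      · split
        · exact hda k
        · exact contDiff_const
      · split
        · exact contDiff_const
        · exact (ha _).mul hdφ
    · intro x
      simp only [Nat.succ_ne_zero, if_false, Nat.add_sub_cancel]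
      rw [if_neg (by omega), han x, zero_add, pow_succ]
    · intro x
      -- differentiate the sum
      have hterm : ∀ k, DifferentiableAt ℝ
          (fun y => a k y * iteratedDeriv k f (φ y)) x := by
        intro k
        exact ((ha k).differentiable (by simp) x).mul
          (((hitf k).differentiable (by simp) (φ x)).comp x (hφ.differentiable (by simp) x))
      have hderivterm : ∀ k, deriv (fun y => a k y * iteratedDeriv k f (φ y)) x
          = deriv (a k) x * iteratedDeriv k f (φ x)
            + a k x * (iteratedDeriv (k+1) f (φ x) * deriv φ x) := by
        intro k
        have hc : DifferentiableAt ℝ (fun y => iteratedDeriv k f (φ y)) x := by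
          have := ((hitf k).differentiable (by simp) (φ x)).comp x
            (hφ.differentiable (by simp) x)
          simpa [Function.comp_def] using this
        rw [deriv_fun_mul ((ha k).differentiable (by simp) x) hc]
        congr 1
        have hco := deriv_comp x ((hitf k).differentiable (by simp) (φ x))
          (hφ.differentiable (by simp) x)
        rw [Function.comp_def] at hco
        rw [hco, ← iteratedDeriv_succ]
      have key : iteratedDeriv (n+1) (f ∘ φ) x
          = ∑ k ∈ Finset.range (n+1),
              (deriv (a k) x * iteratedDeriv k f (φ x)
                + a k x * (iteratedDeriv (k+1) f (φ x) * deriv φ x)) := by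
        rw [iteratedDeriv_succ]
        have : iteratedDeriv n (f ∘ φ)
            = fun y => ∑ k ∈ Finset.range (n+1), a k y * iteratedDeriv k f (φ y) :=
          funext hsum
        rw [this, deriv_fun_sum (fun k _ => hterm k)]
        exact Finset.sum_congr rfl (fun k _ => hderivterm k)
      rw [key, Finset.sum_add_distrib]
      -- RHS: split the new coefficient sum
      have hsplit : ∑ k ∈ Finset.range (n+2),
          ((if k ≤ n then deriv (a k) x else 0)
            + (if k = 0 then 0 else a (k-1) x * deriv φ x)) * iteratedDeriv k f (φ x)
          = ∑ k ∈ Finset.range (n+2), (if k ≤ n then deriv (a k) x else 0) * iteratedDeriv k f (φ x)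
          + ∑ k ∈ Finset.range (n+2), (if k = 0 then 0 else a (k-1) x * deriv φ x) * iteratedDeriv k f (φ x) := by
        rw [← Finset.sum_add_distrib]
        exact Finset.sum_congr rfl (fun k _ => by ring)
      rw [hsplit]
      congr 1
      · rw [Finset.sum_range_succ (n := n+1), if_neg (by omega), zero_mul, add_zero]
        exact Finset.sum_congr rfl (fun k hk => by
          rw [if_pos (by simpa [Nat.lt_succ_iff] using hk)])
      · rw [Finset.sum_range_succ' _ (n+1)]
        have h0 : (if (0:ℕ) = 0 then (0:ℝ) else a (0-1) x * deriv φ x)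
            * iteratedDeriv 0 f (φ x) = 0 := by simp
        rw [h0, add_zero]
        refine Finset.sum_congr rfl (fun k _ => ?_)
        rw [if_neg (Nat.succ_ne_zero k)]
        simp only [Nat.add_sub_cancel]
        ring

theorem eigenfunction_low_derivatives_vanish
    (φ : ℝ → ℝ) (hφ : ContDiff ℝ (⊤ : ℕ∞) φ)
    (hmap : Set.MapsTo φ (Set.Icc 0 1) (Set.Icc 0 1))
    (x₀ : ℝ) (hx₀ : x₀ ∈ Set.Icc (0 : ℝ) 1) (hfix : φ x₀ = x₀)
    (hd0 : deriv φ x₀ ≠ 0) (hd1 : |deriv φ x₀| < 1)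
    (p : ℕ) (hp : 1 ≤ p)
    (f : ℝ → ℝ) (hf : ContDiff ℝ (⊤ : ℕ∞) f)
    (heq : ∀ x ∈ Set.Icc (0 : ℝ) 1, f (φ x) = (deriv φ x₀) ^ p * f x) :
    ∀ ν : ℕ, ν < p → iteratedDeriv ν f x₀ = 0 := by
  have hφ' : ContDiff ℝ ∞ φ := hφ.of_le (by simp)
  have hf' : ContDiff ℝ ∞ f := hf.of_le (by simp)
  set lam := deriv φ x₀ with hlam
  -- the difference g vanishes on Icc, so all its iterated derivs vanish there
  have hcomp : ContDiff ℝ ∞ (f ∘ φ) := hf'.comp hφ'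
  have hg : ContDiff ℝ ∞ (fun x => f (φ x) - lam ^ p * f x) := by
    exact hcomp.sub (contDiff_const.mul hf')
  have hvan := zero_on_Icc_iteratedDeriv _ hg
    (fun x hx => by rw [heq x hx]; ring)
  have hsplitg : ∀ n x, iteratedDeriv n (fun x => f (φ x) - lam ^ p * f x) x
      = iteratedDeriv n (f ∘ φ) x - lam ^ p * iteratedDeriv n f x := by
    intro n x
    have h1 : iteratedDeriv n ((f ∘ φ) - fun x => lam ^ p * f x) x
        = iteratedDeriv n (f ∘ φ) x - iteratedDeriv n (fun x => lam ^ p * f x) x := by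
      rw [← iteratedDerivWithin_univ, ← iteratedDerivWithin_univ, ← iteratedDerivWithin_univ,
        iteratedDerivWithin_sub (Set.mem_univ x) uniqueDiffOn_univ
          ((hcomp.contDiffOn.of_le (nat_le_inf' _)).contDiffWithinAt (Set.mem_univ x))
          (((contDiff_const.mul hf').contDiffOn.of_le (nat_le_inf' _)).contDiffWithinAt (Set.mem_univ x))]
    have h2 : iteratedDeriv n (fun x => lam ^ p * f x) x
        = lam ^ p * iteratedDeriv n f x := by
      have := iteratedDeriv_const_smul (𝕜 := ℝ) (F := ℝ) (n := n) (f := f) (R := ℝ) (x := x)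
      -- use smul version on (lam^p) • f
      rw [show (fun x => lam ^ p * f x) = (lam ^ p) • f by funext x; simp [smul_eq_mul]]
      rw [← iteratedDerivWithin_univ, ← iteratedDerivWithin_univ,
        iteratedDerivWithin_const_smul (Set.mem_univ x) uniqueDiffOn_univ _
          ((hf'.contDiffOn.of_le (nat_le_inf' _)).contDiffWithinAt (Set.mem_univ x))]
      simp [smul_eq_mul]
    calc iteratedDeriv n (fun x => f (φ x) - lam ^ p * f x) x
        = iteratedDeriv n ((f ∘ φ) - fun x => lam ^ p * f x) x := by
          congr 1
      _ = _ := by rw [h1, h2]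
  have hfun : ∀ n, iteratedDeriv n (f ∘ φ) x₀ = lam ^ p * iteratedDeriv n f x₀ := by
    intro n
    have := hvan n x₀ hx₀
    rw [hsplitg n x₀] at this
    linarith
  -- strong induction
  intro ν
  induction ν using Nat.strong_induction_on with
  | _ ν ih =>
    intro hν
    obtain ⟨a, ha, han, hsum⟩ := comp_iteratedDeriv_expansion φ f hφ' hf' ν
    have hval : iteratedDeriv ν (f ∘ φ) x₀ = lam ^ ν * iteratedDeriv ν f x₀ := by
      rw [hsum x₀, hfix, Finset.sum_range_succ, han x₀, ← hlam]
      rw [Finset.sum_eq_zero (fun k hk => by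
        rw [ih k (Finset.mem_range.mp hk) (lt_trans (Finset.mem_range.mp hk) hν), mul_zero])]
      ring
    have hmain : lam ^ ν * iteratedDeriv ν f x₀ = lam ^ p * iteratedDeriv ν f x₀ := by
      rw [← hval, hfun ν]
    have hne : lam ^ ν ≠ lam ^ p := by
      intro h
      have h1 : |lam| ^ p < |lam| ^ ν :=
        pow_lt_pow_right_of_lt_one₀ (abs_pos.mpr hd0) hd1 hν
      rw [← abs_pow, ← abs_pow, h] at h1
      exact lt_irrefl _ h1
    have hz : (lam ^ ν - lam ^ p) * iteratedDeriv ν f x₀ = 0 := by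
      rw [sub_mul, hmain, sub_self]
    rcases mul_eq_zero.mp hz with h | h
    · exact absurd (sub_eq_zero.mp h) hne
    · exact h
end

section
/- Let φ(x) = (1 + x²)/2 on [0,1], and for A > 0 let F_A(t) = exp(A(t − 1)). Then for every n ≥ 2, the n-th derivative of F_A ∘ φ at x = 1 satisfies (F_A ∘ φ)^{(n)}(1) ≥ binomial(n,2) · A^{n−1}. -/
/-!
Substituting x = 1 + z turns the exponent into A z + A z²/2, so (F_A ∘ φ)(1 + z) is the product of
exp (A z²/2) and exp (A z). All derivatives at 0 of both factors are nonnegative: those of exp (A z)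
are A^k, and those of g(z) = exp (A z²/2) satisfy g^(k+2)(0) = A (k+1) g^(k)(0). Hence every term of the
Leibniz expansion of the n-th derivative is nonnegative, and the term with two derivatives on the
Gaussian factor is exactly binomial(n, 2) · A · A^(n-2).
-/

open Real

theorem choose_mul_iteratedDeriv_mul_le_iteratedDeriv_mul {f g : ℝ → ℝ} {x : ℝ} {n i : ℕ}
    (hf : ContDiffAt ℝ n f x) (hg : ContDiffAt ℝ n g x)
    (hf₀ : ∀ k, 0 ≤ iteratedDeriv k f x) (hg₀ : ∀ k, 0 ≤ iteratedDeriv k g x) (hi : i ≤ n) :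
    n.choose i * iteratedDeriv i f x * iteratedDeriv (n - i) g x ≤
      iteratedDeriv n (fun y => f y * g y) x := by
  rw [iteratedDeriv_fun_mul hf hg]
  exact Finset.single_le_sum (f := fun k => (n.choose k : ℝ) * iteratedDeriv k f x *
      iteratedDeriv (n - k) g x)
    (fun k _ => by have := hf₀ k; have := hg₀ (n - k); positivity)
    (Finset.mem_range_succ_iff.mpr hi)

section GaussianFactor

variable (c : ℝ)

theorem deriv_exp_mul_sq_half :
    deriv (fun z => exp (c * (z ^ 2 / 2))) = fun z => z * (c * exp (c * (z ^ 2 / 2))) := by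
  funext z
  have h : HasDerivAt (fun z : ℝ => c * (z ^ 2 / 2)) (c * z) z := by
    simpa using ((hasDerivAt_pow 2 z).div_const 2).const_mul c
  rw [h.exp.deriv]
  ring

theorem iteratedDeriv_exp_mul_sq_half_zero_add_two (k : ℕ) :
    iteratedDeriv (k + 2) (fun z => exp (c * (z ^ 2 / 2))) 0 =
      c * (k + 1) * iteratedDeriv k (fun z => exp (c * (z ^ 2 / 2))) 0 := by
  rw [iteratedDeriv_succ', deriv_exp_mul_sq_half,
    iteratedDeriv_fun_mul (by fun_prop) (by fun_prop),
    Finset.sum_eq_single 1 (fun j _ hj => by simp [iteratedDeriv_fun_id_zero, hj]) (by simp)]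
  simp [iteratedDeriv_fun_id_zero, iteratedDeriv_const_mul_field]
  ring

theorem iteratedDeriv_exp_mul_sq_half_zero_nonneg (hc : 0 ≤ c) (k : ℕ) :
    0 ≤ iteratedDeriv k (fun z => exp (c * (z ^ 2 / 2))) 0 := by
  induction k using Nat.twoStepInduction with
  | zero => simp
  | one => simp [iteratedDeriv_one, deriv_exp_mul_sq_half]
  | more k ih _ =>
    rw [iteratedDeriv_exp_mul_sq_half_zero_add_two]
    positivity

end GaussianFactor

theorem faa_di_bruno_lower_bound
    (A : ℝ) (hA : 0 < A) (n : ℕ) (hn : 2 ≤ n) :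
    ((n.choose 2 : ℕ) : ℝ) * A ^ (n - 1) ≤
      iteratedDeriv n (fun x : ℝ => Real.exp (A * ((1 + x ^ 2) / 2 - 1))) 1 := by
  have hshift : iteratedDeriv n (fun x : ℝ => exp (A * ((1 + x ^ 2) / 2 - 1))) 1 =
      iteratedDeriv n (fun z => exp (A * (z ^ 2 / 2)) * exp (A * z)) 0 := by
    have := congrFun (iteratedDeriv_comp_const_add n
      (fun x : ℝ => exp (A * ((1 + x ^ 2) / 2 - 1))) 1) 0
    rw [add_zero] at this
    rw [← this]
    congr 1
    funext z
    rw [← exp_add]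
    ring_nf
  have hsecond : iteratedDeriv 2 (fun z => exp (A * (z ^ 2 / 2))) 0 = A := by
    simpa using iteratedDeriv_exp_mul_sq_half_zero_add_two A 0
  have hpow : A * A ^ (n - 2) = A ^ (n - 1) := by
    rw [← pow_succ']
    congr 1
    omega
  calc ((n.choose 2 : ℕ) : ℝ) * A ^ (n - 1)
      = n.choose 2 * iteratedDeriv 2 (fun z => exp (A * (z ^ 2 / 2))) 0 *
          iteratedDeriv (n - 2) (fun z => exp (A * z)) 0 := by
        simp [hsecond, ← hpow, mul_assoc]
    _ ≤ _ := choose_mul_iteratedDeriv_mul_le_iteratedDeriv_mul (by fun_prop) (by fun_prop)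
          (iteratedDeriv_exp_mul_sq_half_zero_nonneg A hA.le) (fun k => by simp; positivity) hn
    _ = _ := hshift.symm
end

section
/- Let (M_n) be a weight sequence with n² M_n / M_{n+1} → ∞ as n → ∞, and let φ(x) = (1+x²)/2. Then there is no constant K such that ∑_{n≥0} ‖(F∘φ)^{(n)}‖_∞ / M_n ≤ K ∑_{n≥0} ‖F^{(n)}‖_∞ / M_n for all F in D([0,1],M); in particular composition with φ is not a bounded operator on D([0,1],M). -/
open Filter

/-- The sup norm of a function over the closed unit interval. -/
noncomputable def supNormI (g : ℝ → ℝ) : ℝ := ⨆ x : Set.Icc (0 : ℝ) 1, |g x|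

namespace CompNotBdd

open Polynomial

instance : Nonempty (Set.Icc (0:ℝ) 1) := ⟨⟨0, by norm_num⟩⟩

lemma supNormI_nonneg (g : ℝ → ℝ) : 0 ≤ supNormI g :=
  Real.iSup_nonneg (fun _ => abs_nonneg _)

lemma supNormI_le (g : ℝ → ℝ) {C : ℝ} (h : ∀ x ∈ Set.Icc (0:ℝ) 1, |g x| ≤ C) :
    supNormI g ≤ C :=
  ciSup_le (fun x => h x x.2)

lemma le_supNormI (g : ℝ → ℝ) (hg : Continuous g) {x : ℝ} (hx : x ∈ Set.Icc (0:ℝ) 1) :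
    |g x| ≤ supNormI g := by
  have hb : BddAbove (Set.range fun y : Set.Icc (0:ℝ) 1 => |g y|) := by
    have h1 : (Set.range fun y : Set.Icc (0:ℝ) 1 => |g y|) ⊆ (fun y => |g y|) '' Set.Icc 0 1 := by
      rintro _ ⟨y, rfl⟩; exact ⟨y, y.2, rfl⟩
    exact (isCompact_Icc.image (hg.abs)).bddAbove.mono h1
  exact le_ciSup hb ⟨x, hx⟩

noncomputable def Fa (A : ℝ) : ℝ → ℝ := fun t => Real.exp (A * (t - 1))

lemma Fa_contDiff (A : ℝ) : ContDiff ℝ (⊤ : ℕ∞) (Fa A) := by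
  unfold Fa; fun_prop

lemma iteratedDeriv_Fa (A : ℝ) (n : ℕ) :
    iteratedDeriv n (Fa A) = fun t => A ^ n * Real.exp (A * (t - 1)) := by
  induction n with
  | zero => funext t; simp [Fa]
  | succ n ih =>
    rw [iteratedDeriv_succ, ih]
    funext t
    have h : HasDerivAt (fun t : ℝ => A ^ n * Real.exp (A * (t - 1)))
        (A ^ (n+1) * Real.exp (A * (t - 1))) t := by
      have h1 : HasDerivAt (fun t : ℝ => A * (t - 1)) A t := by
        simpa using ((hasDerivAt_id t).sub_const 1).const_mul A
      have h2 := (Real.hasDerivAt_exp (A * (t - 1))).comp t h1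
      have h3 := h2.const_mul (A ^ n)
      exact h3.congr_deriv (by ring)
    exact h.deriv

noncomputable def Qp (A : ℝ) : ℕ → Polynomial ℝ
  | 0 => 1
  | (n+1) => derivative (Qp A n) + A • (X * Qp A n)

lemma Qp_zero (A : ℝ) : Qp A 0 = 1 := rfl
lemma Qp_succ (A : ℝ) (n : ℕ) :
    Qp A (n+1) = derivative (Qp A n) + A • (X * Qp A n) := rfl

lemma hasDerivAt_G (A x : ℝ) :
    HasDerivAt (fun x : ℝ => Real.exp (A * ((1 + x ^ 2) / 2 - 1)))
      (A * x * Real.exp (A * ((1 + x ^ 2) / 2 - 1))) x := by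
  have h1 : HasDerivAt (fun x : ℝ => A * ((1 + x ^ 2) / 2 - 1)) (A * x) x := by
    have h : HasDerivAt (fun x : ℝ => (1 + x ^ 2) / 2 - 1) x x := by
      have h := (((hasDerivAt_pow 2 x).const_add 1).div_const 2).sub_const 1
      simpa using h
    simpa using h.const_mul A
  have h2 := (Real.hasDerivAt_exp (A * ((1 + x ^ 2) / 2 - 1))).comp x h1
  exact h2.congr_deriv (by ring)

lemma iteratedDeriv_G (A : ℝ) (n : ℕ) :
    iteratedDeriv n (Fa A ∘ fun x => (1 + x ^ 2) / 2)
      = fun x => (Qp A n).eval x * Real.exp (A * ((1 + x ^ 2) / 2 - 1)) := by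
  induction n with
  | zero => funext x; simp [Fa, Function.comp, Qp_zero]
  | succ n ih =>
    rw [iteratedDeriv_succ, ih]
    funext x
    have heval : (Qp A (n+1)).eval x
        = (derivative (Qp A n)).eval x + A * (x * (Qp A n).eval x) := by
      rw [Qp_succ]; simp
    have h : HasDerivAt (fun x : ℝ => (Qp A n).eval x * Real.exp (A * ((1 + x ^ 2) / 2 - 1)))
        ((Qp A (n+1)).eval x * Real.exp (A * ((1 + x ^ 2) / 2 - 1))) x := by
      have h := ((Qp A n).hasDerivAt x).mul (hasDerivAt_G A x)
      exact h.congr_deriv (by rw [heval]; ring)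
    exact h.deriv

lemma Qp_natDegree (A : ℝ) (n : ℕ) : (Qp A n).natDegree ≤ n := by
  induction n with
  | zero => simp [Qp_zero]
  | succ n ih =>
    rw [Qp_succ]
    refine le_trans (natDegree_add_le _ _) ?_
    simp only [sup_le_iff]
    constructor
    · exact le_trans (natDegree_derivative_le _) (by omega)
    · have h1 : (X * Qp A n).natDegree ≤ n + 1 := by
        refine le_trans (natDegree_mul_le (p := X) (q := Qp A n)) ?_
        have h0 : (X : Polynomial ℝ).natDegree = 1 := natDegree_X
        omega
      have h2 : (A • (X * Qp A n)).natDegree ≤ (X * Qp A n).natDegree :=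
        natDegree_smul_le A (X * Qp A n)
      omega

lemma Qp_coeff_nonneg (A : ℝ) (hA : 0 ≤ A) (n k : ℕ) : 0 ≤ (Qp A n).coeff k := by
  induction n generalizing k with
  | zero =>
    rw [Qp_zero, coeff_one]
    positivity
  | succ n ih =>
    rw [Qp_succ]
    simp only [coeff_add, coeff_smul, smul_eq_mul, coeff_derivative]
    have h2 : 0 ≤ (X * Qp A n).coeff k := by
      cases k with
      | zero => simp
      | succ k => rw [coeff_X_mul]; exact ih k
    have h1 : 0 ≤ (Qp A n).coeff (k+1) * ((k:ℝ)+1) :=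
      mul_nonneg (ih _) (by positivity)
    exact add_nonneg h1 (mul_nonneg hA h2)

lemma Qp_coeff_top (A : ℝ) (n : ℕ) : (Qp A n).coeff n = A ^ n := by
  induction n with
  | zero => simp [Qp_zero]
  | succ n ih =>
    rw [Qp_succ]
    simp only [coeff_add, coeff_smul, smul_eq_mul, coeff_derivative, coeff_X_mul, ih]
    rw [coeff_eq_zero_of_natDegree_lt (lt_of_le_of_lt (Qp_natDegree A n) (by omega))]
    ring

lemma Qp_coeff_sub2 (A : ℝ) (n : ℕ) :
    (Qp A (n+2)).coeff n = ((n+2).choose 2 : ℕ) * A ^ (n+1) := by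
  induction n with
  | zero =>
    rw [show (0:ℕ)+2 = 1+1 from rfl, Qp_succ]
    simp only [coeff_add, coeff_smul, smul_eq_mul, coeff_derivative, Qp_coeff_top,
      mul_coeff_zero, coeff_X_zero]
    norm_num
  | succ n ih =>
    rw [show n+1+2 = (n+2)+1 from rfl, Qp_succ]
    simp only [coeff_add, coeff_smul, smul_eq_mul, coeff_derivative, coeff_X_mul, ih,
      Qp_coeff_top]
    have hc : ((n+3).choose 2 : ℕ) = (n+2) + (n+2).choose 2 := by
      rw [show n+3 = (n+2)+1 from rfl, Nat.choose_succ_succ]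
      simp [Nat.choose_one_right]
    rw [show n+1+2 = n+3 from rfl, hc]
    push_cast
    ring

lemma coeff_le_eval_one (p : Polynomial ℝ) (h : ∀ k, 0 ≤ p.coeff k) (n : ℕ) :
    p.coeff n ≤ p.eval 1 := by
  rw [Polynomial.eval_eq_sum_range (p := p) 1]
  simp only [one_pow, mul_one]
  rcases le_or_gt n p.natDegree with hn | hn
  · exact Finset.single_le_sum (fun k _ => h k) (Finset.mem_range.mpr (by omega))
  · rw [coeff_eq_zero_of_natDegree_lt hn]
    exact Finset.sum_nonneg (fun k _ => h k)

lemma choose_two_mul (k : ℕ) : 2 * (k+2).choose 2 = (k+2)*(k+1) := by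
  induction k with
  | zero => rfl
  | succ k ih =>
    rw [show k+1+2 = (k+2)+1 from rfl, Nat.choose_succ_succ]
    rw [Nat.mul_add, ih, Nat.choose_one_right]
    ring

end CompNotBdd

open CompNotBdd

set_option maxHeartbeats 2000000 in
theorem composition_not_bounded
    (M : ℕ → ℝ) (hpos : ∀ n, 0 < M n) (hM0 : M 0 = 1)
    (hbin : ∀ n m : ℕ, (((n + m).choose n : ℕ) : ℝ) * M n * M m ≤ M (n + m))
    (hgrow : Tendsto (fun n : ℕ => (n : ℝ) ^ 2 * M n / M (n + 1)) atTop atTop) :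
    ¬ ∃ K : ℝ, ∀ F : ℝ → ℝ, ContDiff ℝ (⊤ : ℕ∞) F →
        Summable (fun n : ℕ => supNormI (iteratedDeriv n F) / M n) →
        Summable (fun n : ℕ =>
          supNormI (iteratedDeriv n (F ∘ fun x => (1 + x ^ 2) / 2)) / M n) ∧
        (∑' n : ℕ, supNormI (iteratedDeriv n (F ∘ fun x => (1 + x ^ 2) / 2)) / M n) ≤
          K * ∑' n : ℕ, supNormI (iteratedDeriv n F) / M n := by
  rintro ⟨K, hK⟩
  set K' : ℝ := max K 1 with hK'def
  have hK'1 : (1:ℝ) ≤ K' := le_max_right _ _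
  have hK'0 : (0:ℝ) < K' := lt_of_lt_of_le one_pos hK'1
  have hKK' : K ≤ K' := le_max_left _ _
  -- the growth threshold
  obtain ⟨n₀, hn₀⟩ := eventually_atTop.mp (hgrow.eventually_ge_atTop (48 * K'))
  have h48 : ∀ m, n₀ ≤ m → 48 * K' * M (m+1) ≤ (m:ℝ)^2 * M m := by
    intro m hm
    have h := hn₀ m hm
    rw [le_div_iff₀ (hpos (m+1))] at h
    linarith
  -- the constant c
  set c : ℝ := ∑ i ∈ Finset.range n₀, 1 / M i with hcdef
  have hc0 : 0 ≤ c := Finset.sum_nonneg fun i _ => div_nonneg zero_le_one (hpos i).le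
  -- choose j and N
  obtain ⟨j₁, hj₁⟩ := pow_unbounded_of_one_lt (c * M n₀) (by norm_num : (1:ℝ) < 4)
  obtain ⟨j₂, hj₂⟩ := exists_nat_ge (12 * K')
  set j : ℕ := max (max j₁ j₂) 2 with hjdef
  set N : ℕ := n₀ + j with hNdef
  have hjj₁ : j₁ ≤ j := le_trans (le_max_left _ _) (le_max_left _ _)
  have hjj₂ : j₂ ≤ j := le_trans (le_max_right _ _) (le_max_left _ _)
  have hj2 : 2 ≤ j := le_max_right _ _
  have hN2 : 2 ≤ N := by omega
  have hNn₀ : n₀ ≤ N := by omega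
  have hj₁' : c * M n₀ < 4 ^ j :=
    lt_of_lt_of_le hj₁ (pow_le_pow_right₀ (by norm_num) hjj₁)
  have hN2R : (2:ℝ) ≤ (N:ℝ) := by exact_mod_cast hN2
  have h12N : 12 * K' ≤ (N:ℝ) := by
    refine le_trans hj₂ ?_
    exact_mod_cast le_trans hjj₂ (by omega : j ≤ N)
  have h12N2 : 12 * K' ≤ (N:ℝ)^2 := by nlinarith
  -- define A
  set A : ℝ := (N:ℝ)^2 / (12 * K') with hAdef
  have h12K0 : (0:ℝ) < 12 * K' := by linarith
  have hA1 : 1 ≤ A := (one_le_div h12K0).mpr h12N2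
  have hA0 : (0:ℝ) < A := lt_of_lt_of_le one_pos hA1
  have hA48 : 48 * K' * A = 4 * (N:ℝ)^2 := by
    rw [hAdef]; field_simp; ring
  clear_value A N j c K'
  -- weights
  set w : ℕ → ℝ := fun m => A ^ m / M m with hwdef
  have hw0 : ∀ m, 0 ≤ w m := fun m => div_nonneg (by positivity) (hpos m).le
  clear_value w
  -- lower bound on M
  have hM1 : 0 < M 1 := hpos 1
  have M_lb : ∀ m : ℕ, M 1 ^ m * (m.factorial : ℝ) ≤ M m := by
    intro m
    induction m with
    | zero => simp [hM0]
    | succ m ih =>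
      have h := hbin m 1
      rw [Nat.choose_succ_self_right] at h
      push_cast at h
      have h2 : M 1 ^ (m+1) * ((m+1).factorial : ℝ)
          = ((m:ℝ)+1) * (M 1 ^ m * (m.factorial : ℝ)) * M 1 := by
        rw [Nat.factorial_succ]; push_cast; ring
      rw [h2]
      calc ((m:ℝ)+1) * (M 1 ^ m * (m.factorial : ℝ)) * M 1
          ≤ ((m:ℝ)+1) * M m * M 1 := by
            apply mul_le_mul_of_nonneg_right _ hM1.le
            exact mul_le_mul_of_nonneg_left ih (by positivity)
        _ ≤ M (m+1) := h
  -- summability of weights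
  have hw_sum : Summable w := by
    have hdom : ∀ m, w m ≤ (A / M 1) ^ m / (m.factorial : ℝ) := by
      intro m
      have hlb : (0:ℝ) < M 1 ^ m * (m.factorial : ℝ) := by positivity
      have h1 : A ^ m / M m ≤ A ^ m / (M 1 ^ m * (m.factorial : ℝ)) :=
        div_le_div_of_nonneg_left (by positivity) hlb (M_lb m)
      have h2 : (A / M 1) ^ m / (m.factorial : ℝ) = A ^ m / (M 1 ^ m * (m.factorial : ℝ)) := by
        rw [div_pow, div_div]
      simp only [hwdef]
      rw [h2]
      exact h1
    exact Summable.of_nonneg_of_le hw0 hdom (Real.summable_pow_div_factorial (A / M 1))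
  -- bound for F_A
  have hs_le : ∀ m, supNormI (iteratedDeriv m (Fa A)) / M m ≤ w m := by
    intro m
    have h1 : supNormI (iteratedDeriv m (Fa A)) ≤ A ^ m := by
      rw [iteratedDeriv_Fa]
      apply supNormI_le
      intro x hx
      rw [abs_of_nonneg (by positivity)]
      have hexp : Real.exp (A * (x - 1)) ≤ 1 := by
        rw [Real.exp_le_one_iff]
        have : x - 1 ≤ 0 := by have := hx.2; linarith
        exact mul_nonpos_of_nonneg_of_nonpos hA0.le this
      calc A ^ m * Real.exp (A * (x - 1)) ≤ A ^ m * 1 :=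
            mul_le_mul_of_nonneg_left hexp (by positivity)
        _ = A ^ m := mul_one _
    simp only [hwdef]
    exact (div_le_div_iff_of_pos_right (hpos m)).mpr h1
  have hs0 : ∀ m, 0 ≤ supNormI (iteratedDeriv m (Fa A)) / M m :=
    fun m => div_nonneg (supNormI_nonneg _) (hpos m).le
  have hs_sum : Summable (fun m => supNormI (iteratedDeriv m (Fa A)) / M m) :=
    Summable.of_nonneg_of_le hs0 hs_le hw_sum
  obtain ⟨hT_sum, hT_le⟩ := hK (Fa A) (Fa_contDiff A) hs_sum
  set t : ℕ → ℝ := fun m =>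
    supNormI (iteratedDeriv m (Fa A ∘ fun x => (1 + x ^ 2) / 2)) / M m with htdef
  set s : ℕ → ℝ := fun m => supNormI (iteratedDeriv m (Fa A)) / M m with hsdef
  clear_value t s
  have ht0 : ∀ m, 0 ≤ t m := by
    intro m
    simp only [htdef]
    exact div_nonneg (supNormI_nonneg _) (hpos m).le
  -- key termwise lower bound for the composition
  have ht_lb : ∀ m : ℕ, 3 * K' * w (m + N) ≤ t (m + N) := by
    intro m
    simp only [htdef, hwdef]
    obtain ⟨k, hk⟩ : ∃ k, m + N = k + 2 := ⟨m + N - 2, by omega⟩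
    rw [hk]
    have hNk : N ≤ k + 2 := by omega
    have hcont : Continuous (iteratedDeriv (k+2) (Fa A ∘ fun x => (1 + x ^ 2) / 2)) := by
      rw [iteratedDeriv_G]
      apply Continuous.mul
      · exact (Qp A (k+2)).continuous
      · exact Real.continuous_exp.comp (by fun_prop)
    have h1 : ((k+2).choose 2 : ℕ) * A ^ (k+1)
        ≤ supNormI (iteratedDeriv (k+2) (Fa A ∘ fun x => (1 + x ^ 2) / 2)) := by
      have h2 := le_supNormI _ hcont (x := 1) (by norm_num)
      have hval : (iteratedDeriv (k+2) (Fa A ∘ fun x => (1 + x ^ 2) / 2)) 1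
          = (Qp A (k+2)).eval 1 := by
        rw [iteratedDeriv_G]
        norm_num
      calc ((k+2).choose 2 : ℕ) * A ^ (k+1) = (Qp A (k+2)).coeff k :=
            (Qp_coeff_sub2 A k).symm
        _ ≤ (Qp A (k+2)).eval 1 := coeff_le_eval_one _ (Qp_coeff_nonneg A hA0.le _) k
        _ ≤ |(iteratedDeriv (k+2) (Fa A ∘ fun x => (1 + x ^ 2) / 2)) 1| := by
            rw [hval]; exact le_abs_self _
        _ ≤ _ := h2
    -- numeric bound
    have h3KA : 3 * (K' * A) = (N:ℝ)^2 / 4 := by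
      ring_nf; ring_nf at hA48; linarith
    have hnat : N * N ≤ 2 * ((k+2)*(k+1)) := by nlinarith
    have hnatR : (N:ℝ) * (N:ℝ) ≤ 2 * (((k:ℝ)+2)*((k:ℝ)+1)) := by exact_mod_cast hnat
    have hch : 2 * (((k+2).choose 2 : ℕ) : ℝ) = ((k:ℝ)+2)*((k:ℝ)+1) := by
      exact_mod_cast choose_two_mul k
    have hC4 : (N:ℝ)^2 / 4 ≤ (((k+2).choose 2 : ℕ) : ℝ) := by
      have hsq : (N:ℝ)^2 = (N:ℝ) * (N:ℝ) := sq (N:ℝ) ▸ by ring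
      linarith
    have hnum : 3 * K' * A ^ (k+2) ≤ (((k+2).choose 2 : ℕ) : ℝ) * A ^ (k+1) := by
      calc 3 * K' * A ^ (k+2) = (3 * (K' * A)) * A ^ (k+1) := by ring
        _ = ((N:ℝ)^2 / 4) * A ^ (k+1) := by rw [h3KA]
        _ ≤ (((k+2).choose 2 : ℕ) : ℝ) * A ^ (k+1) :=
            mul_le_mul_of_nonneg_right hC4 (by positivity)
    rw [← mul_div_assoc]
    exact (div_le_div_iff_of_pos_right (hpos (k+2))).mpr (le_trans hnum h1)
  -- monotonicity of weights
  have hstep : ∀ k, n₀ ≤ k → k < 2*N → w k ≤ w (k+1) := by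
    intro k hk hk2
    have hMk : M (k+1) ≤ A * M k := by
      have h1 := h48 k hk
      have h2 : (k:ℝ)^2 ≤ 4*(N:ℝ)^2 := by
        have hkN : (k:ℝ) ≤ 2*(N:ℝ) := by exact_mod_cast le_of_lt hk2
        nlinarith [Nat.cast_nonneg (α := ℝ) k]
      have h3 : (k:ℝ)^2 * M k ≤ 4*(N:ℝ)^2 * M k :=
        mul_le_mul_of_nonneg_right h2 (hpos k).le
      rw [← hA48] at h3
      have h4 := le_trans h1 h3
      have h5 : 48*K'*(M (k+1)) ≤ 48*K'*(A * M k) := by ring_nf; ring_nf at h4; linarith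
      exact le_of_mul_le_mul_left h5 (by positivity)
    simp only [hwdef]
    rw [div_le_div_iff₀ (hpos k) (hpos (k+1))]
    calc A^k * M (k+1) ≤ A^k * (A * M k) :=
          mul_le_mul_of_nonneg_left hMk (by positivity)
      _ = A^(k+1) * M k := by ring
  have hmono : ∀ d k, n₀ ≤ k → k + d ≤ 2*N → w k ≤ w (k + d) := by
    intro d
    induction d with
    | zero => intro k _ _; simp
    | succ d ih =>
      intro k hk hkd
      have h1 := ih k hk (by omega)
      have h2 := hstep (k+d) (by omega) (by omega)
      exact le_trans h1 h2
  -- sums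
  have hwN_sum : Summable (fun m => w (m + N)) := (summable_nat_add_iff N).mpr hw_sum
  have htN_sum : Summable (fun m => t (m + N)) := (summable_nat_add_iff N).mpr hT_sum
  have hT_ge : 3 * K' * (∑' m, w (m + N)) ≤ ∑' m, t m := by
    have h1 : ∑' m, 3*K'* w (m+N) ≤ ∑' m, t (m+N) :=
      Summable.tsum_le_tsum ht_lb (hwN_sum.mul_left _) htN_sum
    rw [tsum_mul_left] at h1
    have h2 : ∑' m, t (m+N) ≤ ∑' m, t m := by
      rw [← Summable.sum_add_tsum_nat_add N hT_sum]
      have h3 : 0 ≤ ∑ i ∈ Finset.range N, t i := Finset.sum_nonneg fun i _ => ht0 i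
      linarith
    linarith
  have hs_le' : ∀ m, s m ≤ w m := by
    intro m; simp only [hsdef]; exact hs_le m
  have hs0' : ∀ m, 0 ≤ s m := by
    intro m; simp only [hsdef]; exact hs0 m
  have hS_le : ∑' m, s m ≤ ∑' m, w m := Summable.tsum_le_tsum hs_le' hs_sum hw_sum
  have hS0 : 0 ≤ ∑' m, s m := tsum_nonneg hs0'
  have hsplit : ∑' m, w m = (∑ i ∈ Finset.range N, w i) + ∑' m, w (m + N) :=
    (Summable.sum_add_tsum_nat_add N hw_sum).symm
  -- bound the finite part
  have hrange : ∑ i ∈ Finset.range N, w i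
      ≤ (∑ i ∈ Finset.range n₀, w i) + ∑' m, w (m + N) := by
    have hIco : ∑ i ∈ Finset.range N, w i
        = ∑ i ∈ Finset.range n₀, w i + ∑ i ∈ Finset.Ico n₀ N, w i := by
      rw [Finset.range_eq_Ico, Finset.range_eq_Ico]
      exact (Finset.sum_Ico_consecutive w (Nat.zero_le n₀) hNn₀).symm
    have h1 : ∑ i ∈ Finset.Ico n₀ N, w i ≤ ∑ i ∈ Finset.Ico n₀ N, w (i + N) := by
      apply Finset.sum_le_sum
      intro i hi
      obtain ⟨hi1, hi2⟩ := Finset.mem_Ico.mp hi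
      exact hmono N i hi1 (by omega)
    have h2 : ∑ i ∈ Finset.Ico n₀ N, w (i + N) ≤ ∑' m, w (m + N) :=
      Summable.sum_le_tsum _ (fun i _ => hw0 _) hwN_sum
    linarith
  -- bound the head by c * A^n₀
  have hE : ∑ i ∈ Finset.range n₀, w i ≤ A ^ n₀ * c := by
    have h1 : ∀ i ∈ Finset.range n₀, w i ≤ A ^ n₀ * (1 / M i) := by
      intro i hi
      rw [mul_one_div]
      simp only [hwdef]
      exact (div_le_div_iff_of_pos_right (hpos i)).mpr
        (pow_le_pow_right₀ hA1 (le_of_lt (Finset.mem_range.mp hi)))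
    calc ∑ i ∈ Finset.range n₀, w i ≤ ∑ i ∈ Finset.range n₀, A ^ n₀ * (1 / M i) :=
          Finset.sum_le_sum h1
      _ = A ^ n₀ * c := by rw [hcdef, Finset.mul_sum]
  -- the product bound
  have hMN : ∀ i : ℕ, (48*K')^i * M (n₀ + i) ≤ M n₀ * ∏ m ∈ Finset.Ico n₀ (n₀+i), (m:ℝ)^2 := by
    intro i
    induction i with
    | zero => simp
    | succ i ih =>
      rw [show n₀ + (i+1) = (n₀+i)+1 from rfl,
        Finset.prod_Ico_succ_top (by omega : n₀ ≤ n₀+i)]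
      have h1 := h48 (n₀+i) (by omega)
      calc (48*K')^(i+1) * M ((n₀+i)+1) = (48*K')^i * (48*K' * M ((n₀+i)+1)) := by ring
        _ ≤ (48*K')^i * (((n₀+i:ℕ):ℝ)^2 * M (n₀+i)) :=
            mul_le_mul_of_nonneg_left h1 (by positivity)
        _ = ((n₀+i:ℕ):ℝ)^2 * ((48*K')^i * M (n₀+i)) := by ring
        _ ≤ ((n₀+i:ℕ):ℝ)^2 * (M n₀ * ∏ m ∈ Finset.Ico n₀ (n₀+i), (m:ℝ)^2) :=
            mul_le_mul_of_nonneg_left ih (by positivity)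
        _ = M n₀ * ((∏ m ∈ Finset.Ico n₀ (n₀+i), (m:ℝ)^2) * ((n₀+i:ℕ):ℝ)^2) := by ring
  have hprod : ∏ m ∈ Finset.Ico n₀ N, ((m:ℕ):ℝ)^2 ≤ ((N:ℝ)^2)^j := by
    have hcard : (Finset.Ico n₀ N).card = j := by
      rw [Nat.card_Ico]; omega
    have h1 : ∀ m ∈ Finset.Ico n₀ N, ((m:ℕ):ℝ)^2 ≤ (N:ℝ)^2 := by
      intro m hm
      have hm1 : m ≤ N := le_of_lt (Finset.mem_Ico.mp hm).2
      have hm2 : (m:ℝ) ≤ (N:ℝ) := by exact_mod_cast hm1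
      nlinarith [Nat.cast_nonneg (α := ℝ) m]
    have h2 := Finset.prod_le_prod (s := Finset.Ico n₀ N)
      (f := fun m : ℕ => ((m:ℕ):ℝ)^2) (g := fun _ : ℕ => (N:ℝ)^2)
      (fun m _ => by positivity) h1
    rw [Finset.prod_const, hcard] at h2
    exact h2
  -- key strict inequality
  have key : A ^ n₀ * c * M N < A ^ N := by
    have hBj : (0:ℝ) < (48*K')^j := by positivity
    rw [← mul_lt_mul_iff_right₀ hBj]
    have hMNj : (48*K')^j * M N ≤ M n₀ * ∏ m ∈ Finset.Ico n₀ N, (m:ℝ)^2 := by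
      rw [hNdef]; exact hMN j
    have hANpos : (0:ℝ) < A ^ n₀ * ((N:ℝ)^2)^j := by positivity
    calc (48*K')^j * (A ^ n₀ * c * M N)
        = (c * A ^ n₀) * ((48*K')^j * M N) := by ring
      _ ≤ (c * A ^ n₀) * (M n₀ * ∏ m ∈ Finset.Ico n₀ N, (m:ℝ)^2) :=
          mul_le_mul_of_nonneg_left hMNj (mul_nonneg hc0 (by positivity))
      _ ≤ (c * A ^ n₀) * (M n₀ * ((N:ℝ)^2)^j) := by
          apply mul_le_mul_of_nonneg_left _ (mul_nonneg hc0 (by positivity))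
          exact mul_le_mul_of_nonneg_left hprod (hpos n₀).le
      _ = (A ^ n₀ * ((N:ℝ)^2)^j) * (c * M n₀) := by ring
      _ < (A ^ n₀ * ((N:ℝ)^2)^j) * 4^j := mul_lt_mul_of_pos_left hj₁' hANpos
      _ = A ^ n₀ * ((4:ℝ) * (N:ℝ)^2)^j := by rw [mul_pow]; ring
      _ = A ^ n₀ * ((48*K')^j * A^j) := by rw [← hA48, mul_pow]
      _ = (48*K')^j * A ^ N := by rw [hNdef, pow_add]; ring
  have hEwN : ∑ i ∈ Finset.range n₀, w i < w N := by
    have h1 : A ^ n₀ * c < w N := by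
      simp only [hwdef]
      exact (lt_div_iff₀ (hpos N)).mpr key
    exact lt_of_le_of_lt hE h1
  have hwNS : w N ≤ ∑' m, w (m + N) := by
    have h := Summable.le_tsum hwN_sum 0 (fun i _ => hw0 _)
    simpa using h
  -- final contradiction
  set Shi : ℝ := ∑' m, w (m + N) with hShidef
  have c1 : K * (∑' m, s m) ≤ K' * (∑' m, s m) :=
    mul_le_mul_of_nonneg_right hKK' hS0
  have c2 : K' * (∑' m, s m) ≤ K' * (∑' m, w m) :=
    mul_le_mul_of_nonneg_left hS_le hK'0.le
  have c3 : (∑' m, w m) < 3 * Shi := by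
    rw [hsplit]
    have := lt_of_le_of_lt hrange (by linarith [lt_of_lt_of_le hEwN hwNS] :
      (∑ i ∈ Finset.range n₀, w i) + Shi < Shi + Shi)
    linarith
  have c4 : K' * (∑' m, w m) < K' * (3 * Shi) := mul_lt_mul_of_pos_left c3 hK'0
  have hT_le' : ∑' m, t m ≤ K * (∑' m, s m) := hT_le
  linarith [hT_ge, hT_le', c1, c2, c4]
end

section
/- Let (M_n) be a weight sequence with sup_n n² M_{n-1}/M_n < ∞, and let φ : [0,1] → [0,1] be C^∞ with sup_k (‖φ^{(k)}‖_∞/k!)^{1/k} < ∞ and ‖φ'‖_∞ ≤ 1. Then for every F ∈ D([0,1],M), the composition F ∘ φ lies in D([0,1],M), i.e. ∑_{n≥0} ‖(F∘φ)^{(n)}‖_∞/M_n < ∞. -/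
namespace CompDC
open Finset

lemma nonemptyI : Nonempty (Set.Icc (0:ℝ) 1) := ⟨⟨0, by norm_num⟩⟩

lemma supNormI_nonneg (g : ℝ → ℝ) : 0 ≤ supNormI g :=
  Real.iSup_nonneg fun x => abs_nonneg _

lemma le_supNormI {g : ℝ → ℝ} (hg : Continuous g) {x : ℝ} (hx : x ∈ Set.Icc (0:ℝ) 1) :
    |g x| ≤ supNormI g := by
  have hb : BddAbove (Set.range fun y : Set.Icc (0:ℝ) 1 => |g y|) := by
    obtain ⟨C, hC⟩ := isCompact_Icc.exists_bound_of_continuousOn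
      (f := g) (s := Set.Icc (0:ℝ) 1) hg.continuousOn
    refine ⟨C, ?_⟩
    rintro _ ⟨y, rfl⟩
    simpa [Real.norm_eq_abs] using hC y y.2
  exact le_ciSup hb ⟨x, hx⟩

lemma supNormI_le {g : ℝ → ℝ} {a : ℝ} (h : ∀ x ∈ Set.Icc (0:ℝ) 1, |g x| ≤ a) :
    supNormI g ≤ a := by
  have : Nonempty (Set.Icc (0:ℝ) 1) := nonemptyI
  exact ciSup_le fun x => h x x.2

noncomputable def W (b : ℕ → ℝ) : ℕ → ℕ → ℝ
  | 0, n => if n = 0 then 1 else 0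
  | m + 1, 0 => 0
  | m + 1, n + 1 => ∑ i ∈ range (n + 1), (n.choose i : ℝ) * b (n + 1 - i) * W b m i

lemma W_zero_of_lt (b : ℕ → ℝ) : ∀ m n, n < m → W b m n = 0 := by
  intro m
  induction m with
  | zero => intro n h; omega
  | succ m IH =>
    intro n h
    match n with
    | 0 => simp [W]
    | n + 1 =>
      rw [W]
      refine Finset.sum_eq_zero fun i hi => ?_
      rw [IH i (by simp at hi; omega), mul_zero]

lemma W_nonneg (b : ℕ → ℝ) (hb : ∀ k, 0 ≤ b k) : ∀ m n, 0 ≤ W b m n := by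
  intro m
  induction m with
  | zero => intro n; rw [W]; split <;> norm_num
  | succ m IH =>
    intro n
    match n with
    | 0 => simp [W]
    | n + 1 =>
      rw [W]
      exact Finset.sum_nonneg fun i _ =>
        mul_nonneg (mul_nonneg (by positivity) (hb _)) (IH i)

end CompDC

open scoped ContDiff
namespace CompDC
open Finset

lemma lemA (φ : ℝ → ℝ) (hφ : ContDiff ℝ ∞ φ)
    (hmap : Set.MapsTo φ (Set.Icc 0 1) (Set.Icc 0 1)) :
    ∀ n (F : ℝ → ℝ), ContDiff ℝ ∞ F → ∀ x ∈ Set.Icc (0:ℝ) 1,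
      |iteratedDeriv n (F ∘ φ) x| ≤
        ∑ m ∈ range (n + 1), supNormI (iteratedDeriv m F) *
          W (fun k => supNormI (iteratedDeriv k φ)) m n := by
  intro n
  induction n using Nat.strong_induction_on with
  | _ n IH =>
  match n with
  | 0 =>
    intro F hF x hx
    simp only [zero_add, Finset.sum_range_one]
    have hW : W (fun k => supNormI (iteratedDeriv k φ)) 0 0 = 1 := by simp [W]
    rw [hW, mul_one]
    simpa [iteratedDeriv_zero] using le_supNormI hF.continuous (hmap hx)
  | (n + 1) =>
    intro F hF x hx
    set b : ℕ → ℝ := fun k => supNormI (iteratedDeriv k φ) with hbdef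
    have hb0 : ∀ k, 0 ≤ b k := fun k => supNormI_nonneg _
    have hcast : ∀ k : ℕ, ((k : ℕ) : WithTop ℕ∞) ≤ ∞ := fun k => by exact_mod_cast le_top
    have h1top : (1 : WithTop ℕ∞) ≤ ∞ := by exact_mod_cast le_top
    have hφd : Differentiable ℝ φ := hφ.differentiable (ne_of_gt (lt_of_lt_of_le zero_lt_one h1top))
    have hFd : Differentiable ℝ F := hF.differentiable (ne_of_gt (lt_of_lt_of_le zero_lt_one h1top))
    have hF' : ContDiff ℝ ∞ (deriv F) := (contDiff_infty_iff_deriv.mp hF).2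
    have hφ' : ContDiff ℝ ∞ (deriv φ) := (contDiff_infty_iff_deriv.mp hφ).2
    have hG : ContDiff ℝ ∞ (deriv F ∘ φ) := hF'.comp hφ
    have e1 : iteratedDeriv (n+1) (F ∘ φ) x
        = iteratedDeriv n (fun y => (deriv F ∘ φ) y * deriv φ y) x := by
      rw [iteratedDeriv_succ']
      congr 1
      funext y
      exact deriv_comp y (hFd _) (hφd y)
    rw [e1]
    have hnle : ((n:ℕ) : WithTop ℕ∞) ≤ ∞ := by exact_mod_cast le_top
    have leib := norm_iteratedFDeriv_mul_le (𝕜 := ℝ) hG hφ' x hnle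
    simp only [norm_iteratedFDeriv_eq_norm_iteratedDeriv, Real.norm_eq_abs] at leib
    have hWnn := W_nonneg b hb0
    calc |iteratedDeriv n (fun y => (deriv F ∘ φ) y * deriv φ y) x|
        ≤ ∑ i ∈ range (n+1), (n.choose i : ℝ) * |iteratedDeriv i (deriv F ∘ φ) x|
            * |iteratedDeriv (n-i) (deriv φ) x| := leib
      _ ≤ ∑ i ∈ range (n+1), (n.choose i : ℝ) *
            (∑ m ∈ range (n+1), supNormI (iteratedDeriv (m+1) F) * W b m i) * b (n+1-i) := by
          refine Finset.sum_le_sum fun i hi => ?_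
          have hi' : i ≤ n := by simp at hi; omega
          have hIH := IH i (by omega) (deriv F) hF' x hx
          have hpad : (∑ m ∈ range (i+1), supNormI (iteratedDeriv m (deriv F)) * W b m i)
              = ∑ m ∈ range (n+1), supNormI (iteratedDeriv (m+1) F) * W b m i := by
            rw [← Finset.sum_subset (Finset.range_subset_range.mpr (by omega : i+1 ≤ n+1))]
            · exact Finset.sum_congr rfl fun m _ => by rw [← iteratedDeriv_succ']
            · intro m hm hnotm
              simp only [Finset.mem_range] at hm hnotm
              rw [W_zero_of_lt b m i (by omega), mul_zero]
          have h1 : |iteratedDeriv i (deriv F ∘ φ) x|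
              ≤ ∑ m ∈ range (n+1), supNormI (iteratedDeriv (m+1) F) * W b m i := by
            rw [← hpad]; exact hIH
          have h2 : |iteratedDeriv (n-i) (deriv φ) x| ≤ b (n+1-i) := by
            have he : iteratedDeriv (n+1-i) φ = iteratedDeriv (n-i) (deriv φ) := by
              rw [show n+1-i = (n-i)+1 by omega, iteratedDeriv_succ']
            have hc : Continuous (iteratedDeriv (n+1-i) φ) :=
              hφ.continuous_iteratedDeriv _ (hcast _)
            rw [← he]
            exact le_supNormI hc hx
          have hsumnn : (0:ℝ) ≤ ∑ m ∈ range (n+1), supNormI (iteratedDeriv (m+1) F) * W b m i :=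
            Finset.sum_nonneg fun m _ => mul_nonneg (supNormI_nonneg _) (hWnn m i)
          exact mul_le_mul (mul_le_mul_of_nonneg_left h1 (by positivity)) h2 (abs_nonneg _)
            (by positivity)
      _ = ∑ m ∈ range (n+1), supNormI (iteratedDeriv (m+1) F) * W b (m+1) (n+1) := by
          have hsw : ∀ i ∈ range (n+1), (n.choose i : ℝ) *
              (∑ m ∈ range (n+1), supNormI (iteratedDeriv (m+1) F) * W b m i) * b (n+1-i)
              = ∑ m ∈ range (n+1), supNormI (iteratedDeriv (m+1) F)
                  * ((n.choose i : ℝ) * b (n+1-i) * W b m i) := by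
            intro i _
            rw [Finset.mul_sum, Finset.sum_mul]
            exact Finset.sum_congr rfl fun m _ => by ring
          rw [Finset.sum_congr rfl hsw, Finset.sum_comm]
          refine Finset.sum_congr rfl fun m _ => ?_
          rw [← Finset.mul_sum]
          rfl
      _ = ∑ m ∈ range (n+2), supNormI (iteratedDeriv m F) * W b m (n+1) := by
          have h0 : W b 0 (n+1) = 0 := by simp [W]
          refine Eq.symm ?_
          rw [show n+2 = (n+1)+1 from rfl, Finset.sum_range_succ', h0, mul_zero, add_zero]

end CompDC

namespace CompDC
open Finset Nat

lemma fact_le_mul_pow (e : ℕ) : ∀ d : ℕ, ((e+d)! : ℕ) ≤ e ! * (e+d)^d := by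
  intro d
  induction d with
  | zero => simp
  | succ d IH =>
    have h1 : (e+(d+1))! = (e+d+1) * (e+d)! := by
      rw [show e+(d+1) = (e+d)+1 by omega, Nat.factorial_succ]
    rw [h1]
    calc (e+d+1) * (e+d)! ≤ (e+d+1) * (e ! * (e+d)^d) := Nat.mul_le_mul_left _ IH
      _ ≤ (e+d+1) * (e ! * (e+d+1)^d) :=
          Nat.mul_le_mul_left _ (Nat.mul_le_mul_left _ (Nat.pow_le_pow_left (by omega) d))
      _ = e ! * (e+(d+1))^(d+1) := by ring

lemma two_add_le (t : ℕ) : ((t:ℝ)+2) ≤ 2*(9/2)^t := by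
  have h := one_add_mul_le_pow (by norm_num : (-2:ℝ) ≤ 7/2) t
  have h2 : ((9:ℝ)/2)^t = (1+7/2)^t := by norm_num
  rw [h2]
  nlinarith [h]

lemma geom_le_two (n : ℕ) : ∑ k ∈ range n, ((1:ℝ)/2)^k ≤ 2 := by
  rw [geom_sum_eq (by norm_num : (1:ℝ)/2 ≠ 1) n]
  have h : ∀ x:ℝ, (x - 1)/((1:ℝ)/2 - 1) = 2*(1-x) := fun x => by norm_num; ring
  rw [h]
  have : (0:ℝ) ≤ (1/2:ℝ)^n := by positivity
  linarith

lemma coeff_le {C : ℝ} (hC : 1 ≤ C) (t : ℕ) :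
    ((t:ℝ)+2) * C^(t+2) ≤ (1/2)^t * ((2/9) * (9*C^2)^(t+1)) := by
  have h1 : ((t:ℝ)+2) ≤ 2*(9/2)^t := two_add_le t
  have h2 : C^(t+2) ≤ C^(2*t+2) := pow_le_pow_right₀ hC (by omega)
  calc ((t:ℝ)+2)*C^(t+2) ≤ (2*(9/2)^t) * C^(2*t+2) :=
        mul_le_mul h1 h2 (by positivity) (by positivity)
    _ = (1/2)^t * ((2/9) * (9*C^2)^(t+1)) := by
        rw [div_pow, div_pow, mul_pow, ← pow_mul, show 2*(t+1) = 2*t+2 by omega]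
        field_simp
        ring

lemma core_ineq (n' j : ℕ) (hj : 1 ≤ j) (hjn : j ≤ n') :
    (n':ℝ)^(2*j) + (4/9)*(j:ℝ)*((n':ℝ)+1)^(2*j-1) ≤ ((n':ℝ)+1)^(2*j) := by
  have ha1 : (1:ℝ) ≤ (n':ℝ) := by exact_mod_cast hj.trans hjn
  have hN0 : (0:ℝ) < (n':ℝ)+1 := by linarith
  have hja : (j:ℝ) ≤ (n':ℝ) := by exact_mod_cast hjn
  have hj0 : (0:ℝ) ≤ (j:ℝ) := Nat.cast_nonneg j
  have hb := one_add_mul_le_pow (show (-2:ℝ) ≤ 1/((n':ℝ)+1) by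
    have h0 : (0:ℝ) ≤ 1/((n':ℝ)+1) := by positivity
    linarith) (2*j)
  have hkey : (n':ℝ) * (1 + 1/((n':ℝ)+1)) ≤ (n':ℝ)+1 := by
    rw [mul_add, mul_one, mul_one_div]
    have h1 : (n':ℝ)/((n':ℝ)+1) ≤ 1 := by
      rw [div_le_one hN0]; linarith
    linarith
  have h2 : (n':ℝ)^(2*j) * (1 + 1/((n':ℝ)+1))^(2*j) ≤ ((n':ℝ)+1)^(2*j) := by
    rw [← mul_pow]
    exact pow_le_pow_left₀ (by positivity) hkey _
  have h3 : (n':ℝ)^(2*j) * (1 + (2*(j:ℝ))*(1/((n':ℝ)+1))) ≤ ((n':ℝ)+1)^(2*j) := by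
    refine le_trans ?_ h2
    have hmono := mul_le_mul_of_nonneg_left hb (show (0:ℝ) ≤ (n':ℝ)^(2*j) by positivity)
    refine le_trans (le_of_eq ?_) hmono
    push_cast
    ring
  have h4 : (n':ℝ)^(2*j)*(((n':ℝ)+1) + 2*(j:ℝ)) ≤ ((n':ℝ)+1)^(2*j)*((n':ℝ)+1) := by
    have hmul := mul_le_mul_of_nonneg_right h3 (le_of_lt hN0)
    refine le_trans (le_of_eq ?_) hmul
    field_simp
  have hpow : ((n':ℝ)+1)^(2*j) = ((n':ℝ)+1)^(2*j-1)*((n':ℝ)+1) := by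
    rw [← pow_succ]
    congr 1
    omega
  have hR : (0:ℝ) ≤ ((n':ℝ)+1)^(2*j-1) := by positivity
  have hcoeff : (4/9:ℝ)*(j:ℝ)*(((n':ℝ)+1)+2*(j:ℝ)) ≤ ((n':ℝ)+1)*(2*(j:ℝ)) := by nlinarith
  have h5 : (4/9:ℝ)*(j:ℝ)*((n':ℝ)+1)^(2*j-1)*(((n':ℝ)+1)+2*(j:ℝ))
      ≤ ((n':ℝ)+1)^(2*j)*(2*(j:ℝ)) := by
    rw [hpow]
    nlinarith [mul_le_mul_of_nonneg_left hcoeff hR]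
  have hNj : (0:ℝ) < ((n':ℝ)+1) + 2*(j:ℝ) := by linarith
  have hfin : ((n':ℝ)^(2*j) + (4/9)*(j:ℝ)*((n':ℝ)+1)^(2*j-1)) * (((n':ℝ)+1)+2*(j:ℝ))
      ≤ ((n':ℝ)+1)^(2*j)*(((n':ℝ)+1)+2*(j:ℝ)) := by
    nlinarith [add_le_add h4 h5]
  exact le_of_mul_le_mul_right hfin hNj

end CompDC

namespace CompDC
open Finset Nat

lemma term_bound {C : ℝ} (hC : 1 ≤ C) (m e t : ℕ) :
    (((m+e+t+1).choose (m+e) : ℝ)) * (((t+2)! : ℝ) * C^(t+2)) *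
      ((9*C^2)^e * ((m+e : ℕ):ℝ)^(2*e) / ((e ! : ℕ):ℝ)) ≤
    (1/2)^t * ((2/9) * ((e+t+1 : ℕ):ℝ) * (9*C^2)^(e+t+1) *
      (((m+e+t+1 : ℕ):ℝ)+1)^(2*e+2*t+1) / (((e+t+1)! : ℕ):ℝ)) := by
  have hC0 : (0:ℝ) < C := by linarith
  have hfe : (((e+t+1)! : ℕ):ℝ) ≤ ((e ! : ℕ):ℝ) * ((e+t+1 : ℕ):ℝ)^(t+1) := by
    exact_mod_cast fact_le_mul_pow e (t+1)
  have hch : (((m+e+t+1).choose (m+e) : ℝ)) ≤ ((m+e+t+1:ℕ):ℝ)^(t+1) / (((t+1)! : ℕ):ℝ) := by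
    have h := Nat.choose_symm (show (m+e) ≤ m+e+t+1 by omega)
    have h2 : (m+e+t+1) - (m+e) = t+1 := by omega
    rw [← h, h2]
    exact Nat.choose_le_pow_div (t+1) (m+e+t+1)
  have hiN : ((m+e : ℕ):ℝ) ≤ ((m+e+t+1:ℕ):ℝ)+1 := by push_cast; linarith
  have hn'N : ((m+e+t+1 : ℕ):ℝ) ≤ ((m+e+t+1:ℕ):ℝ)+1 := by linarith
  have hjN : ((e+t+1 : ℕ):ℝ) ≤ ((m+e+t+1:ℕ):ℝ)+1 := by push_cast; linarith
  have hN0 : (0:ℝ) < ((m+e+t+1:ℕ):ℝ)+1 := by positivity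
  have hfac : ((t+2)! : ℝ) = ((t:ℝ)+2) * (((t+1)! : ℕ):ℝ) := by
    rw [show t+2 = (t+1)+1 from rfl, Nat.factorial_succ]
    push_cast
    ring
  -- reduce to a product inequality
  rw [← mul_div_assoc, ← mul_div_assoc,
    div_le_div_iff₀ (by exact_mod_cast Nat.factorial_pos e)
      (by exact_mod_cast Nat.factorial_pos (e+t+1))]
  have hjpow : ((e+t+1 : ℕ):ℝ)^(t+1) ≤ ((e+t+1 : ℕ):ℝ) * (((m+e+t+1:ℕ):ℝ)+1)^t := by
    rw [show ((e+t+1 : ℕ):ℝ)^(t+1) = ((e+t+1 : ℕ):ℝ) * ((e+t+1 : ℕ):ℝ)^t by ring]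
    gcongr
  calc (((m+e+t+1).choose (m+e) : ℝ)) * (((t+2)! : ℝ) * C^(t+2)) *
        ((9*C^2)^e * ((m+e : ℕ):ℝ)^(2*e)) * (((e+t+1)! : ℕ):ℝ)
      ≤ (((m+e+t+1:ℕ):ℝ)^(t+1) / (((t+1)! : ℕ):ℝ)) * (((t+2)! : ℝ) * C^(t+2)) *
        ((9*C^2)^e * ((((m+e+t+1:ℕ):ℝ)+1))^(2*e)) * (((e ! : ℕ):ℝ) * ((e+t+1 : ℕ):ℝ)^(t+1)) := by
        gcongr
    _ = (((t:ℝ)+2) * C^(t+2)) * ((9*C^2)^e *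
          (((m+e+t+1:ℕ):ℝ)^(t+1) * ((((m+e+t+1:ℕ):ℝ)+1))^(2*e) * ((e+t+1 : ℕ):ℝ)^(t+1)))
          * ((e ! : ℕ):ℝ) := by
        rw [hfac]
        have hn : (((t+1)! : ℕ):ℝ) ≠ 0 := by
          exact_mod_cast (Nat.factorial_pos (t+1)).ne'
        field_simp
    _ ≤ ((1/2)^t * ((2/9) * (9*C^2)^(t+1))) * ((9*C^2)^e *
          ((((m+e+t+1:ℕ):ℝ)+1)^(t+1) * ((((m+e+t+1:ℕ):ℝ)+1))^(2*e) *
            (((e+t+1 : ℕ):ℝ) * (((m+e+t+1:ℕ):ℝ)+1)^t)))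
          * ((e ! : ℕ):ℝ) := by
        have hA : (((m+e+t+1:ℕ):ℝ))^(t+1) ≤ ((((m+e+t+1:ℕ):ℝ))+1)^(t+1) :=
          pow_le_pow_left₀ (Nat.cast_nonneg _) hn'N _
        have hinner : (((m+e+t+1:ℕ):ℝ))^(t+1) * ((((m+e+t+1:ℕ):ℝ)+1))^(2*e) * ((e+t+1:ℕ):ℝ)^(t+1)
            ≤ ((((m+e+t+1:ℕ):ℝ))+1)^(t+1) * ((((m+e+t+1:ℕ):ℝ)+1))^(2*e) *
              (((e+t+1:ℕ):ℝ) * ((((m+e+t+1:ℕ):ℝ))+1)^t) :=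
          mul_le_mul (mul_le_mul hA le_rfl (by positivity) (by positivity)) hjpow
            (by positivity) (by positivity)
        have hrest := mul_le_mul_of_nonneg_left hinner
          (show (0:ℝ) ≤ (9*C^2)^e by positivity)
        exact mul_le_mul_of_nonneg_right
          (mul_le_mul (coeff_le hC t) hrest (by positivity) (by positivity))
          (Nat.cast_nonneg _)
    _ = (1/2)^t * ((2/9) * ((e+t+1 : ℕ):ℝ) * (9*C^2)^(e+t+1) *
          (((m+e+t+1 : ℕ):ℝ)+1)^(2*e+2*t+1)) * ((e ! : ℕ):ℝ) := by
        rw [show (9*C^2)^(e+t+1) = (9*C^2)^(t+1) * (9*C^2)^e by rw [← pow_add]; congr 1; omega,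
          show (((m+e+t+1 : ℕ):ℝ)+1)^(2*e+2*t+1)
            = (((m+e+t+1:ℕ):ℝ)+1)^(t+1) * (((m+e+t+1:ℕ):ℝ)+1)^(2*e) * (((m+e+t+1:ℕ):ℝ)+1)^t by
            rw [← pow_add, ← pow_add]; congr 1; omega]
        ring

end CompDC

namespace CompDC
open Finset Nat

lemma W_le (b : ℕ → ℝ) (hb0 : ∀ k, 0 ≤ b k) {C : ℝ} (hC : 1 ≤ C)
    (hb1 : b 1 ≤ 1) (hbk : ∀ k, 1 ≤ k → b k ≤ ((k ! : ℕ):ℝ) * C^k) :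
    ∀ m n, m ≤ n → W b m n ≤ (9*C^2)^(n-m) * (n:ℝ)^(2*(n-m)) / (((n-m)! : ℕ):ℝ) := by
  intro m
  induction m with
  | zero =>
    intro n _
    match n with
    | 0 => simp [W]
    | n+1 =>
      have h0 : W b 0 (n+1) = 0 := by simp [W]
      rw [h0]
      positivity
  | succ m IH =>
    intro n hmn
    match n, hmn with
    | n'+1, hmn =>
    have hm : m ≤ n' := by omega
    have hsub : n'+1-(m+1) = n'-m := by omega
    rw [W, Finset.sum_range_succ, hsub]
    have hWnn := W_nonneg b hb0
    -- bound for the top term (i = n')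
    have hlast : (n'.choose n' : ℝ) * b (n'+1-n') * W b m n'
        ≤ (9*C^2)^(n'-m) * (n':ℝ)^(2*(n'-m)) / (((n'-m)! : ℕ):ℝ) := by
      rw [Nat.choose_self, show n'+1-n' = 1 by omega]
      have hW := IH n' hm
      have h := mul_le_mul hb1 hW (hWnn m n') (by norm_num)
      calc ((1:ℕ):ℝ) * b 1 * W b m n' = b 1 * W b m n' := by norm_num
        _ ≤ 1 * ((9*C^2)^(n'-m) * (n':ℝ)^(2*(n'-m)) / (((n'-m)! : ℕ):ℝ)) := h
        _ = (9*C^2)^(n'-m) * (n':ℝ)^(2*(n'-m)) / (((n'-m)! : ℕ):ℝ) := by rw [one_mul]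
    rcases Nat.eq_or_lt_of_le hm with heq | hlt
    · -- m = n' : lower terms vanish
      have hfront : ∑ i ∈ range n', (n'.choose i : ℝ) * b (n'+1-i) * W b m i = 0 := by
        refine Finset.sum_eq_zero fun i hi => ?_
        rw [W_zero_of_lt b m i (by have := Finset.mem_range.mp hi; omega), mul_zero]
      rw [hfront, zero_add]
      have hj0 : n' - m = 0 := by omega
      rw [hj0] at hlast ⊢
      refine hlast.trans ?_
      simp
    · -- m < n'
      have hj1 : 1 ≤ n' - m := by omega
      have hfront : ∑ i ∈ range n', (n'.choose i : ℝ) * b (n'+1-i) * W b m i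
          ≤ ∑ i ∈ range n', (1/2:ℝ)^(n'-1-i) *
            ((2/9) * ((n'-m : ℕ):ℝ) * (9*C^2)^(n'-m) * ((n'+1 : ℕ):ℝ)^(2*(n'-m)-1)
              / (((n'-m)! : ℕ):ℝ)) := by
        refine Finset.sum_le_sum fun i hi => ?_
        have hin' : i < n' := Finset.mem_range.mp hi
        rcases lt_or_ge i m with him | hmi
        · rw [W_zero_of_lt b m i him, mul_zero]
          positivity
        · obtain ⟨e, rfl⟩ : ∃ e, i = m + e := ⟨i - m, by omega⟩
          obtain ⟨t, rfl⟩ : ∃ t, n' = m + e + t + 1 := ⟨n' - (m+e) - 1, by omega⟩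
          rw [show m+e+t+1+1-(m+e) = t+2 by omega, show m+e+t+1-1-(m+e) = t by omega]
          have hWi : W b m (m+e) ≤ (9*C^2)^e * ((m+e : ℕ):ℝ)^(2*e)/((e ! : ℕ):ℝ) := by
            have h := IH (m+e) (by omega)
            rwa [show m+e-m = e by omega] at h
          have hbt : b (t+2) ≤ (((t+2)! : ℕ):ℝ) * C^(t+2) := hbk (t+2) (by omega)
          have hch0 : (0:ℝ) ≤ (((m+e+t+1).choose (m+e) : ℕ):ℝ) := Nat.cast_nonneg _
          calc (((m+e+t+1).choose (m+e) : ℕ):ℝ) * b (t+2) * W b m (m+e)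
              ≤ (((m+e+t+1).choose (m+e) : ℕ):ℝ) * ((((t+2)! : ℕ):ℝ) * C^(t+2)) *
                ((9*C^2)^e * ((m+e : ℕ):ℝ)^(2*e)/((e ! : ℕ):ℝ)) := by
                refine mul_le_mul (mul_le_mul_of_nonneg_left hbt hch0) hWi (hWnn _ _) ?_
                positivity
            _ ≤ (1/2)^t * ((2/9) * ((e+t+1 : ℕ):ℝ) * (9*C^2)^(e+t+1) *
                  (((m+e+t+1 : ℕ):ℝ)+1)^(2*e+2*t+1) / (((e+t+1)! : ℕ):ℝ)) :=
                term_bound hC m e t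
            _ = (1/2)^t * ((2/9) * ((m+e+t+1-m : ℕ):ℝ) * (9*C^2)^(m+e+t+1-m) *
                  ((m+e+t+1+1 : ℕ):ℝ)^(2*(m+e+t+1-m)-1) / (((m+e+t+1-m)! : ℕ):ℝ)) := by
                rw [show m+e+t+1-m = e+t+1 by omega,
                  show 2*(e+t+1)-1 = 2*e+2*t+1 by omega]
                push_cast
                ring
      refine (add_le_add hfront hlast).trans ?_
      -- geometric sum
      have hgeom : ∑ i ∈ range n', (1/2:ℝ)^(n'-1-i) *
            ((2/9) * ((n'-m : ℕ):ℝ) * (9*C^2)^(n'-m) * ((n'+1 : ℕ):ℝ)^(2*(n'-m)-1)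
              / (((n'-m)! : ℕ):ℝ))
          ≤ 2 * ((2/9) * ((n'-m : ℕ):ℝ) * (9*C^2)^(n'-m) * ((n'+1 : ℕ):ℝ)^(2*(n'-m)-1)
              / (((n'-m)! : ℕ):ℝ)) := by
        rw [← Finset.sum_mul]
        have h1 : ∑ i ∈ range n', ((1/2:ℝ))^(n'-1-i) = ∑ i ∈ range n', ((1/2:ℝ))^i :=
          Finset.sum_range_reflect (fun i => ((1/2:ℝ))^i) n'
        rw [h1]
        refine mul_le_mul_of_nonneg_right (geom_le_two n') ?_
        positivity
      refine (add_le_add_left hgeom _).trans ?_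
      -- final core inequality
      have hcore := core_ineq n' (n'-m) hj1 (by omega)
      have hfpos : (0:ℝ) < (((n'-m)! : ℕ):ℝ) := by exact_mod_cast Nat.factorial_pos (n'-m)
      calc 2 * ((2/9) * ((n'-m : ℕ):ℝ) * (9*C^2)^(n'-m) * ((n'+1 : ℕ):ℝ)^(2*(n'-m)-1)
              / (((n'-m)! : ℕ):ℝ))
            + (9*C^2)^(n'-m) * (n':ℝ)^(2*(n'-m)) / (((n'-m)! : ℕ):ℝ)
          = ((9*C^2)^(n'-m) * ((4/9) * ((n'-m : ℕ):ℝ) * ((n'+1 : ℕ):ℝ)^(2*(n'-m)-1)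
              + (n':ℝ)^(2*(n'-m)))) / (((n'-m)! : ℕ):ℝ) := by
            field_simp
            ring
        _ ≤ ((9*C^2)^(n'-m) * ((n'+1 : ℕ):ℝ)^(2*(n'-m))) / (((n'-m)! : ℕ):ℝ) := by
            gcongr
            have h1 : ((n'+1 : ℕ):ℝ) = (n':ℝ)+1 := by push_cast; ring
            rw [h1]
            linarith [hcore]

end CompDC

namespace CompDC
open Finset Nat

lemma pow_self_le : ∀ j : ℕ, (j:ℝ)^j ≤ (Real.exp 1)^j * ((j ! : ℕ):ℝ) := by
  intro j
  induction j with
  | zero => simp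
  | succ j IH =>
    have he1 : (1:ℝ) ≤ Real.exp 1 := by linarith [Real.add_one_le_exp 1]
    rcases Nat.eq_zero_or_pos j with rfl | hj
    · simpa using he1
    · have hj0 : (0:ℝ) < (j:ℝ) := by exact_mod_cast hj
      have hbin : ((j:ℝ)+1)^j ≤ Real.exp 1 * (j:ℝ)^j := by
        have h1 : (1 + 1/(j:ℝ)) ≤ Real.exp (1/(j:ℝ)) := by
          linarith [Real.add_one_le_exp (1/(j:ℝ))]
        have h2 : ((1 + 1/(j:ℝ)))^j ≤ (Real.exp (1/(j:ℝ)))^j :=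
          pow_le_pow_left₀ (by positivity) h1 j
        have h3 : (Real.exp (1/(j:ℝ)))^j = Real.exp 1 := by
          rw [← Real.exp_nat_mul]
          congr 1
          field_simp
        have h4 : ((j:ℝ)+1)^j = (j:ℝ)^j * (1+1/(j:ℝ))^j := by
          rw [← mul_pow]
          congr 1
          field_simp
        calc ((j:ℝ)+1)^j = (j:ℝ)^j * (1+1/(j:ℝ))^j := h4
          _ ≤ (j:ℝ)^j * (Real.exp (1/(j:ℝ)))^j := mul_le_mul_of_nonneg_left h2 (by positivity)
          _ = Real.exp 1 * (j:ℝ)^j := by rw [h3]; ring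
      calc ((j+1:ℕ):ℝ)^(j+1) = ((j:ℝ)+1)^j * ((j:ℝ)+1) := by push_cast; ring
        _ ≤ (Real.exp 1 * (j:ℝ)^j) * ((j:ℝ)+1) :=
            mul_le_mul_of_nonneg_right hbin (by positivity)
        _ ≤ (Real.exp 1 * ((Real.exp 1)^j * ((j !:ℕ):ℝ))) * ((j:ℝ)+1) := by
            have h5 := mul_le_mul_of_nonneg_left IH (Real.exp_pos 1).le
            exact mul_le_mul_of_nonneg_right h5 (by positivity)
        _ = (Real.exp 1)^(j+1) * (((j+1)! : ℕ):ℝ) := by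
            push_cast [Nat.factorial_succ]
            ring

lemma gamma_summable (D : ℝ) (hD : 0 ≤ D) :
    Summable (fun j : ℕ => D^j * (1/((j !:ℕ):ℝ) + (j:ℝ)^(2*j)/(((j !:ℕ):ℝ))^3)) := by
  have hsum1 : Summable (fun j : ℕ => D^j / ((j !:ℕ):ℝ)) := Real.summable_pow_div_factorial D
  have hsum2 : Summable (fun j : ℕ => (D*(Real.exp 1)^2)^j / ((j !:ℕ):ℝ)) :=
    Real.summable_pow_div_factorial _
  have hbound2 : ∀ j : ℕ, D^j * ((j:ℝ)^(2*j)/(((j !:ℕ):ℝ))^3)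
      ≤ (D*(Real.exp 1)^2)^j / ((j !:ℕ):ℝ) := by
    intro j
    have hfj : (0:ℝ) < ((j !:ℕ):ℝ) := by exact_mod_cast Nat.factorial_pos j
    have h2 : (j:ℝ)^(2*j) ≤ ((Real.exp 1)^2)^j * ((j !:ℕ):ℝ)^2 := by
      have hps := pow_self_le j
      calc (j:ℝ)^(2*j) = ((j:ℝ)^j)^2 := by rw [show 2*j = j*2 by ring, pow_mul]
        _ ≤ ((Real.exp 1)^j * ((j !:ℕ):ℝ))^2 :=
            pow_le_pow_left₀ (by positivity) hps 2
        _ = ((Real.exp 1)^2)^j * ((j !:ℕ):ℝ)^2 := by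
            rw [mul_pow, ← pow_mul, ← pow_mul, show j*2 = 2*j by ring]
    rw [← mul_div_assoc, div_le_div_iff₀ (by positivity) hfj]
    calc D^j * (j:ℝ)^(2*j) * ((j !:ℕ):ℝ)
        ≤ D^j * (((Real.exp 1)^2)^j * ((j !:ℕ):ℝ)^2) * ((j !:ℕ):ℝ) := by
          have := mul_le_mul_of_nonneg_left h2 (show (0:ℝ) ≤ D^j by positivity)
          exact mul_le_mul_of_nonneg_right this hfj.le
      _ = (D*(Real.exp 1)^2)^j * ((j !:ℕ):ℝ)^3 := by
          rw [mul_pow]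
          ring
  have hs2 : Summable (fun j : ℕ => D^j * ((j:ℝ)^(2*j)/(((j !:ℕ):ℝ))^3)) := by
    refine Summable.of_nonneg_of_le (fun j => by positivity) hbound2 hsum2
  have hs1 : Summable (fun j : ℕ => D^j * (1/((j !:ℕ):ℝ))) := by
    refine hsum1.congr fun j => ?_
    rw [mul_one_div]
  exact (hs1.add hs2).congr fun j => by ring

end CompDC

open scoped ContDiff
open Finset CompDC

theorem analytic_selfmap_induces_endomorphism
    (M : ℕ → ℝ) (hpos : ∀ n, 0 < M n) (hM0 : M 0 = 1)
    (hbin : ∀ n m : ℕ, (((n + m).choose n : ℕ) : ℝ) * M n * M m ≤ M (n + m))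
    (hM : ∃ K : ℝ, ∀ n : ℕ, 1 ≤ n → (n : ℝ) ^ 2 * M (n - 1) / M n ≤ K)
    (φ : ℝ → ℝ) (hφ : ContDiff ℝ (⊤ : ℕ∞) φ)
    (hmap : Set.MapsTo φ (Set.Icc 0 1) (Set.Icc 0 1))
    (hanalytic : ∃ C : ℝ, ∀ k : ℕ, 1 ≤ k →
      (supNormI (iteratedDeriv k φ) / k.factorial) ^ ((1 : ℝ) / k) ≤ C)
    (hderiv : supNormI (iteratedDeriv 1 φ) ≤ 1)
    (F : ℝ → ℝ) (hF : ContDiff ℝ (⊤ : ℕ∞) F)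
    (hFD : Summable (fun n : ℕ => supNormI (iteratedDeriv n F) / M n)) :
    Summable (fun n : ℕ => supNormI (iteratedDeriv n (F ∘ φ)) / M n) := by
  classical
  obtain ⟨C₀, hC₀⟩ := hanalytic
  set C : ℝ := max C₀ 1 with hCdef
  have hC1 : (1:ℝ) ≤ C := le_max_right _ _
  have hC0 : (0:ℝ) < C := by linarith
  set b : ℕ → ℝ := fun k => supNormI (iteratedDeriv k φ) with hbdef
  have hb0 : ∀ k, 0 ≤ b k := fun k => supNormI_nonneg _
  have hb1 : b 1 ≤ 1 := hderiv
  have hbk : ∀ k, 1 ≤ k → b k ≤ ((Nat.factorial k : ℕ):ℝ) * C^k := by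
    intro k hk
    have h := hC₀ k hk
    have hkne : (k:ℝ) ≠ 0 := by
      have : 0 < k := hk
      positivity
    have hfk : (0:ℝ) < ((Nat.factorial k : ℕ):ℝ) := by exact_mod_cast Nat.factorial_pos k
    have hx0 : 0 ≤ b k / ((Nat.factorial k : ℕ):ℝ) := div_nonneg (hb0 k) hfk.le
    have hCC : (b k / ((Nat.factorial k : ℕ):ℝ)) ^ ((1:ℝ)/k) ≤ C := le_trans h (le_max_left _ _)
    have hxpow : b k / ((Nat.factorial k : ℕ):ℝ) ≤ C^k := by
      have h2 : ((b k / ((Nat.factorial k : ℕ):ℝ)) ^ ((1:ℝ)/k))^(k:ℕ) ≤ C^(k:ℕ) :=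
        pow_le_pow_left₀ (Real.rpow_nonneg hx0 _) hCC k
      rwa [← Real.rpow_natCast ((b k / ((Nat.factorial k : ℕ):ℝ)) ^ ((1:ℝ)/k)) k,
        ← Real.rpow_mul hx0, one_div, inv_mul_cancel₀ hkne, Real.rpow_one] at h2
    rw [div_le_iff₀ hfk] at hxpow
    linarith [hxpow]
  obtain ⟨K₀, hK₀⟩ := hM
  set K : ℝ := max K₀ 1 with hKdef
  have hK1 : (1:ℝ) ≤ K := le_max_right _ _
  have hK0 : (0:ℝ) < K := by linarith
  have hKstep : ∀ n : ℕ, 1 ≤ n → (n:ℝ)^2 * M (n-1) ≤ K * M n := by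
    intro n hn
    have h := hK₀ n hn
    rw [div_le_iff₀ (hpos n)] at h
    calc (n:ℝ)^2 * M (n-1) ≤ K₀ * M n := h
      _ ≤ K * M n := mul_le_mul_of_nonneg_right (le_max_left _ _) (hpos n).le
  have hchain : ∀ m j : ℕ, ((Nat.factorial (m+j) : ℕ):ℝ)^2 * M m ≤ K^j * M (m+j) * ((Nat.factorial m : ℕ):ℝ)^2 := by
    intro m j
    induction j with
    | zero =>
        simp only [Nat.add_zero, pow_zero, one_mul]
        exact le_of_eq (mul_comm _ _)
    | succ j IH =>
      have hstep := hKstep (m+j+1) (by omega)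
      rw [show m+j+1-1 = m+j from rfl] at hstep
      calc ((Nat.factorial (m+j+1) : ℕ):ℝ)^2 * M m
          = ((m+j+1:ℕ):ℝ)^2 * (((Nat.factorial (m+j) : ℕ):ℝ)^2 * M m) := by
            push_cast [Nat.factorial_succ]
            ring
        _ ≤ ((m+j+1:ℕ):ℝ)^2 * (K^j * M (m+j) * ((Nat.factorial m : ℕ):ℝ)^2) :=
            mul_le_mul_of_nonneg_left IH (by positivity)
        _ = (K^j * ((Nat.factorial m : ℕ):ℝ)^2) * (((m+j+1:ℕ):ℝ)^2 * M (m+j)) := by ring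
        _ ≤ (K^j * ((Nat.factorial m : ℕ):ℝ)^2) * (K * M (m+j+1)) := by
            refine mul_le_mul_of_nonneg_left ?_ (by positivity)
            exact hstep
        _ = K^(j+1) * M (m+j+1) * ((Nat.factorial m : ℕ):ℝ)^2 := by
            ring
  have hphii : ContDiff ℝ ∞ φ := hφ.of_le (mod_cast le_top)
  have hFii : ContDiff ℝ ∞ F := hF.of_le (mod_cast le_top)
  have hS : ∀ n, supNormI (iteratedDeriv n (F ∘ φ))
      ≤ ∑ m ∈ range (n+1), supNormI (iteratedDeriv m F) * W b m n :=
    fun n => supNormI_le fun x hx => lemA φ hphii hmap n F hFii x hx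
  set A : ℕ → ℝ := fun m => supNormI (iteratedDeriv m F) / M m with hAdef
  set γ : ℕ → ℝ := fun j => (36*C^2*K)^j * (1/((Nat.factorial j : ℕ):ℝ) + (j:ℝ)^(2*j)/(((Nat.factorial j : ℕ):ℝ))^3)
    with hγdef
  have hγ0 : ∀ j, 0 ≤ γ j := fun j => by rw [hγdef]; positivity
  have hA0 : ∀ m, 0 ≤ A m := fun m => div_nonneg (supNormI_nonneg _) (hpos m).le
  -- the key pointwise estimate
  have hkey : ∀ m j : ℕ, M m * ((9*C^2)^j * ((m+j:ℕ):ℝ)^(2*j) / ((Nat.factorial j : ℕ):ℝ)) ≤ γ j * M (m+j) := by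
    intro m j
    have hfj : (0:ℝ) < ((Nat.factorial j : ℕ):ℝ) := by exact_mod_cast Nat.factorial_pos j
    have hfm : (0:ℝ) < ((Nat.factorial m : ℕ):ℝ) := by exact_mod_cast Nat.factorial_pos m
    have hfn : (0:ℝ) < ((Nat.factorial (m+j) :ℕ):ℝ) := by exact_mod_cast Nat.factorial_pos (m+j)
    rcases le_or_gt j (m+2) with hcase | hcase
    · -- j small relative to m
      have hf1 : ((Nat.factorial m : ℕ):ℝ) * ((m+1:ℕ):ℝ)^j ≤ ((Nat.factorial (m+j) : ℕ):ℝ) := by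
        exact_mod_cast Nat.factorial_mul_pow_le_factorial
      have hn2 : ((m+j:ℕ):ℝ) ≤ 2 * ((m+1:ℕ):ℝ) := by push_cast; linarith [show (j:ℝ) ≤ (m:ℝ)+2 by exact_mod_cast hcase]
      have hnpow : ((m+j:ℕ):ℝ)^j ≤ 2^j * ((m+1:ℕ):ℝ)^j := by
        calc ((m+j:ℕ):ℝ)^j ≤ (2 * ((m+1:ℕ):ℝ))^j := pow_le_pow_left₀ (Nat.cast_nonneg _) hn2 j
          _ = 2^j * ((m+1:ℕ):ℝ)^j := mul_pow _ _ _
      -- (m+j)^{2j} * (m!)² ≤ 4^j * ((m+j)!)²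
      have hsq : ((m+j:ℕ):ℝ)^(2*j) * ((Nat.factorial m : ℕ):ℝ)^2 ≤ 4^j * ((Nat.factorial (m+j) : ℕ):ℝ)^2 := by
        have h1 : ((m+j:ℕ):ℝ)^(2*j) = (((m+j:ℕ):ℝ)^j)^2 := by
          rw [show 2*j = j*2 by ring, pow_mul]
        have h2 : (((m+j:ℕ):ℝ)^j * ((Nat.factorial m : ℕ):ℝ))^2 ≤ (2^j * ((Nat.factorial (m+j) : ℕ):ℝ))^2 := by
          apply pow_le_pow_left₀ (by positivity)
          calc ((m+j:ℕ):ℝ)^j * ((Nat.factorial m : ℕ):ℝ) ≤ (2^j * ((m+1:ℕ):ℝ)^j) * ((Nat.factorial m : ℕ):ℝ) :=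
                mul_le_mul_of_nonneg_right hnpow hfm.le
            _ = 2^j * (((Nat.factorial m : ℕ):ℝ) * ((m+1:ℕ):ℝ)^j) := by ring
            _ ≤ 2^j * ((Nat.factorial (m+j) : ℕ):ℝ) := mul_le_mul_of_nonneg_left hf1 (by positivity)
        calc ((m+j:ℕ):ℝ)^(2*j) * ((Nat.factorial m : ℕ):ℝ)^2 = (((m+j:ℕ):ℝ)^j * ((Nat.factorial m : ℕ):ℝ))^2 := by
              rw [h1]; ring
          _ ≤ (2^j * ((Nat.factorial (m+j) : ℕ):ℝ))^2 := h2
          _ = 4^j * ((Nat.factorial (m+j) : ℕ):ℝ)^2 := by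
              rw [mul_pow, ← pow_mul, show j*2 = 2*j by ring,
                show (2:ℝ)^(2*j) = 4^j by rw [pow_mul]; norm_num]
      -- conclude
      have hMM : ((m+j:ℕ):ℝ)^(2*j) * M m ≤ 4^j * K^j * M (m+j) := by
        have h3 : ((m+j:ℕ):ℝ)^(2*j) * M m * ((Nat.factorial m : ℕ):ℝ)^2
            ≤ 4^j * (K^j * M (m+j) * ((Nat.factorial m : ℕ):ℝ)^2) := by
          calc ((m+j:ℕ):ℝ)^(2*j) * M m * ((Nat.factorial m : ℕ):ℝ)^2
              = (((m+j:ℕ):ℝ)^(2*j) * ((Nat.factorial m : ℕ):ℝ)^2) * M m := by ring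
            _ ≤ (4^j * ((Nat.factorial (m+j) : ℕ):ℝ)^2) * M m :=
                mul_le_mul_of_nonneg_right hsq (hpos m).le
            _ = 4^j * (((Nat.factorial (m+j) : ℕ):ℝ)^2 * M m) := by ring
            _ ≤ 4^j * (K^j * M (m+j) * ((Nat.factorial m : ℕ):ℝ)^2) :=
                mul_le_mul_of_nonneg_left (hchain m j) (by positivity)
        have h4 : ((m+j:ℕ):ℝ)^(2*j) * M m * ((Nat.factorial m : ℕ):ℝ)^2
            ≤ 4^j * K^j * M (m+j) * ((Nat.factorial m : ℕ):ℝ)^2 := by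
          calc ((m+j:ℕ):ℝ)^(2*j) * M m * ((Nat.factorial m : ℕ):ℝ)^2
              ≤ 4^j * (K^j * M (m+j) * ((Nat.factorial m : ℕ):ℝ)^2) := h3
            _ = 4^j * K^j * M (m+j) * ((Nat.factorial m : ℕ):ℝ)^2 := by ring
        exact le_of_mul_le_mul_right h4 (by positivity)
      calc M m * ((9*C^2)^j * ((m+j:ℕ):ℝ)^(2*j) / ((Nat.factorial j : ℕ):ℝ))
          = ((9*C^2)^j / ((Nat.factorial j : ℕ):ℝ)) * (((m+j:ℕ):ℝ)^(2*j) * M m) := by ring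
        _ ≤ ((9*C^2)^j / ((Nat.factorial j : ℕ):ℝ)) * (4^j * K^j * M (m+j)) :=
            mul_le_mul_of_nonneg_left hMM (by positivity)
        _ = ((36*C^2*K)^j * (1/((Nat.factorial j : ℕ):ℝ))) * M (m+j) := by
            rw [show (36*C^2*K)^j = 9^j * (C^2)^j * 4^j * K^j by
              rw [← mul_pow, ← mul_pow, ← mul_pow]; ring_nf]
            field_simp
            ring
        _ ≤ γ j * M (m+j) := by
            refine mul_le_mul_of_nonneg_right ?_ (hpos _).le
            rw [hγdef]
            have : (0:ℝ) ≤ (36*C^2*K)^j * ((j:ℝ)^(2*j)/(((Nat.factorial j : ℕ):ℝ))^3) := by positivity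
            nlinarith [this]
    · -- j large: m + 2 < j
      have hmj : m ≤ j := by omega
      have hf2 : ((Nat.factorial m : ℕ):ℝ) * ((Nat.factorial j : ℕ):ℝ) ≤ ((Nat.factorial (m+j) : ℕ):ℝ) := by
        exact_mod_cast Nat.le_of_dvd (Nat.factorial_pos (m+j))
          (Nat.factorial_mul_factorial_dvd_factorial_add m j)
      have hn2j : ((m+j:ℕ):ℝ) ≤ 2*(j:ℝ) := by
        push_cast
        have : (m:ℝ) ≤ (j:ℝ) := by exact_mod_cast hmj
        linarith
      have hnpow : ((m+j:ℕ):ℝ)^(2*j) ≤ 4^j * (j:ℝ)^(2*j) := by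
        calc ((m+j:ℕ):ℝ)^(2*j) ≤ (2*(j:ℝ))^(2*j) :=
              pow_le_pow_left₀ (Nat.cast_nonneg _) hn2j _
          _ = 4^j * (j:ℝ)^(2*j) := by
              rw [mul_pow, show (2:ℝ)^(2*j) = 4^j by rw [pow_mul]; norm_num]
      -- (j!)² M m ≤ K^j M (m+j)
      have hjfM : ((Nat.factorial j : ℕ):ℝ)^2 * M m ≤ K^j * M (m+j) := by
        have h1 : (((Nat.factorial j : ℕ):ℝ)^2 * M m) * ((Nat.factorial m : ℕ):ℝ)^2 ≤ (K^j * M (m+j)) * ((Nat.factorial m : ℕ):ℝ)^2 := by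
          calc (((Nat.factorial j : ℕ):ℝ)^2 * M m) * ((Nat.factorial m : ℕ):ℝ)^2
              = (((Nat.factorial m : ℕ):ℝ) * ((Nat.factorial j : ℕ):ℝ))^2 * M m := by ring
            _ ≤ ((Nat.factorial (m+j) : ℕ):ℝ)^2 * M m := by
                refine mul_le_mul_of_nonneg_right ?_ (hpos m).le
                exact pow_le_pow_left₀ (by positivity) hf2 2
            _ ≤ K^j * M (m+j) * ((Nat.factorial m : ℕ):ℝ)^2 := hchain m j
            _ = (K^j * M (m+j)) * ((Nat.factorial m : ℕ):ℝ)^2 := by ring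
        exact le_of_mul_le_mul_right h1 (by positivity)
      calc M m * ((9*C^2)^j * ((m+j:ℕ):ℝ)^(2*j) / ((Nat.factorial j : ℕ):ℝ))
          ≤ M m * ((9*C^2)^j * (4^j * (j:ℝ)^(2*j)) / ((Nat.factorial j : ℕ):ℝ)) := by
            refine mul_le_mul_of_nonneg_left ?_ (hpos m).le
            refine (div_le_div_iff_of_pos_right hfj).mpr ?_
            exact mul_le_mul_of_nonneg_left hnpow (by positivity)
        _ = ((36*C^2*K)^j * ((j:ℝ)^(2*j)/(((Nat.factorial j : ℕ):ℝ))^3)) * ((((Nat.factorial j : ℕ):ℝ)^2 * M m) / K^j) := by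
            rw [show (36*C^2*K)^j = 9^j * (C^2)^j * 4^j * K^j by
              rw [← mul_pow, ← mul_pow, ← mul_pow]; ring_nf]
            have hKj : (K:ℝ)^j ≠ 0 := by positivity
            field_simp
            ring
        _ ≤ ((36*C^2*K)^j * ((j:ℝ)^(2*j)/(((Nat.factorial j : ℕ):ℝ))^3)) * ((K^j * M (m+j)) / K^j) := by
            refine mul_le_mul_of_nonneg_left ?_ (by positivity)
            exact (div_le_div_iff_of_pos_right (by positivity)).mpr hjfM
        _ = ((36*C^2*K)^j * ((j:ℝ)^(2*j)/(((Nat.factorial j : ℕ):ℝ))^3)) * M (m+j) := by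
            rw [mul_div_assoc]
            congr 1
            field_simp
        _ ≤ γ j * M (m+j) := by
            refine mul_le_mul_of_nonneg_right ?_ (hpos _).le
            rw [hγdef]
            have : (0:ℝ) ≤ (36*C^2*K)^j * (1/((Nat.factorial j : ℕ):ℝ)) := by positivity
            nlinarith [this]
  -- per-n comparison with the Cauchy product
  have hcomp : ∀ n, supNormI (iteratedDeriv n (F ∘ φ)) / M n
      ≤ ∑ m ∈ range (n+1), A m * γ (n-m) := by
    intro n
    rw [div_le_iff₀ (hpos n)]
    refine (hS n).trans ?_
    rw [Finset.sum_mul]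
    refine Finset.sum_le_sum fun m hm => ?_
    have hmn : m ≤ n := by have := Finset.mem_range.mp hm; omega
    obtain ⟨j, rfl⟩ : ∃ j, n = m + j := ⟨n - m, by omega⟩
    have hWle := W_le b hb0 hC1 hb1 hbk m (m+j) (by omega)
    rw [show m+j-m = j by omega] at hWle
    have hGm : supNormI (iteratedDeriv m F) = A m * M m := by
      rw [hAdef]
      exact (div_mul_cancel₀ _ (hpos m).ne').symm
    calc supNormI (iteratedDeriv m F) * W b m (m+j)
        ≤ supNormI (iteratedDeriv m F) * ((9*C^2)^j * ((m+j:ℕ):ℝ)^(2*j) / ((Nat.factorial j : ℕ):ℝ)) :=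
          mul_le_mul_of_nonneg_left hWle (supNormI_nonneg _)
      _ = A m * (M m * ((9*C^2)^j * ((m+j:ℕ):ℝ)^(2*j) / ((Nat.factorial j : ℕ):ℝ))) := by
          rw [hGm]; ring
      _ ≤ A m * (γ j * M (m+j)) := mul_le_mul_of_nonneg_left (hkey m j) (hA0 m)
      _ = A m * γ (m+j-m) * M (m+j) := by rw [show m+j-m = j by omega]; ring
  -- summability via Cauchy product
  have hsA : Summable (fun m => ‖A m‖) := by
    refine hFD.congr fun m => ?_
    rw [Real.norm_eq_abs, abs_of_nonneg (hA0 m)]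
  have hγsum : Summable γ := by
    rw [hγdef]
    exact gamma_summable _ (by positivity)
  have hsγ : Summable (fun j => ‖γ j‖) := by
    refine hγsum.congr fun j => ?_
    rw [Real.norm_eq_abs, abs_of_nonneg (hγ0 j)]
  have hconv := summable_norm_sum_mul_range_of_summable_norm hsA hsγ
  refine Summable.of_nonneg_of_le
    (fun n => div_nonneg (supNormI_nonneg _) (hpos n).le) (fun n => ?_) hconv
  refine (hcomp n).trans ?_
  rw [Real.norm_eq_abs]
  exact le_abs_self _
end

section
/- Let (M_n) be a weight sequence with n² M_n/M_{n+1} → ∞ as n → ∞. Then the entire function g(z) = ∑_{n≥0} z^n/M_n has order ρ > 1/2, or order ρ = 1/2 with infinite type. -/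
open Filter

/-- The order of the entire function `g(z) = ∑ zⁿ/Mₙ`, via the standard coefficient
formula `ρ = limsup (n log n)/(-log aₙ)` with `aₙ = 1/Mₙ`. -/
noncomputable def entireOrder (M : ℕ → ℝ) : ℝ :=
  Filter.limsup (fun n : ℕ => ((n : ℝ) * Real.log n) / Real.log (M n)) Filter.atTop

open Real
open scoped Nat

/-!
Taking `m = 1` in the binomial inequality gives `Mₙ ≥ n! M₁ⁿ M₀`, so `log Mₙ` grows like
`n log n` and the ratios `n log n / log Mₙ` are bounded, which makes their `limsup` meaningful.
In the other direction, `n² Mₙ / Mₙ₊₁ ≥ (2C)²` eventually gives `Mₙ ≤ A (n / 2C)²ⁿ ≤ (n / C)²ⁿ`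
for large `n`. With `C = 1` this bounds the order below by `1/2`, and for arbitrary `C` it says
`n Mₙ^(-1/(2n)) ≥ C` eventually, i.e. the type for the order `1/2` is infinite.
-/

theorem factorial_mul_pow_mul_le {u : ℕ → ℝ} {c : ℝ} (hc : 0 ≤ c)
    (h : ∀ n : ℕ, ((n : ℝ) + 1) * u n * c ≤ u (n + 1)) (n : ℕ) :
    (n ! : ℝ) * c ^ n * u 0 ≤ u n := by
  induction n with
  | zero => simp
  | succ n ih =>
    calc ((n + 1)! : ℝ) * c ^ (n + 1) * u 0 = ((n : ℝ) + 1) * c * ((n ! : ℝ) * c ^ n * u 0) := by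
          push_cast [Nat.factorial_succ]; ring
      _ ≤ ((n : ℝ) + 1) * c * u n := by gcongr
      _ ≤ u (n + 1) := by linarith [h n]

theorem mul_log_sub_le_log_factorial (n : ℕ) : (n : ℝ) * log n - n ≤ log n ! := by
  have h : (n : ℝ) ^ n ≤ exp n * n ! :=
    (div_le_iff₀ (by positivity)).1 (pow_div_factorial_le_exp (n : ℝ) n.cast_nonneg n)
  rcases n.eq_zero_or_pos with rfl | hn
  · simp
  have := log_le_log (by positivity) h
  rw [log_mul (exp_pos _).ne' (by positivity), log_exp, log_pow] at this
  linarith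

theorem eventually_mul_log_le_two_mul_log {u : ℕ → ℝ} {c d : ℝ} (hc : 0 < c) (hd : 0 < d)
    (h : ∀ n : ℕ, (n ! : ℝ) * c ^ n * d ≤ u n) :
    ∀ᶠ n : ℕ in atTop, (n : ℝ) * log n ≤ 2 * log (u n) := by
  set K := 1 - log c + |log d|
  have hlog : ∀ᶠ n : ℕ in atTop, 2 * K ≤ log n :=
    (tendsto_log_atTop.comp tendsto_natCast_atTop_atTop).eventually_ge_atTop _
  filter_upwards [hlog, eventually_ge_atTop 1] with n hKn hn
  have hn' : (1 : ℝ) ≤ n := by exact_mod_cast hn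
  have hu := log_le_log (by positivity) (h n)
  rw [log_mul (by positivity) hd.ne', log_mul (by positivity) (by positivity), log_pow] at hu
  nlinarith [mul_log_sub_le_log_factorial n, mul_le_mul_of_nonneg_left hKn (by linarith : (0 : ℝ) ≤ n),
    neg_abs_le (log d), mul_nonneg (sub_nonneg.2 hn') (abs_nonneg (log d))]

theorem exists_eventually_le_mul_pow {u f : ℕ → ℝ} (hf : Monotone f)
    (hf0 : ∀ᶠ k in atTop, 0 < f k) (h : ∀ᶠ k in atTop, u (k + 1) ≤ f k * u k) :
    ∃ A, ∀ᶠ n in atTop, u n ≤ A * f n ^ n := by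
  obtain ⟨N, hN⟩ := eventually_atTop.1 (hf0.and h)
  set A := max (u N / f N ^ N) 0
  refine ⟨A, eventually_atTop.2 ⟨N, fun n hn => ?_⟩⟩
  induction n, hn using Nat.le_induction with
  | base =>
    have hfN : 0 < f N ^ N := pow_pos (hN N le_rfl).1 N
    calc u N = u N / f N ^ N * f N ^ N := (div_mul_cancel₀ _ hfN.ne').symm
      _ ≤ A * f N ^ N := by gcongr; exact le_max_left _ _
  | succ n hn ih =>
    obtain ⟨hfn, hun⟩ := hN n hn
    have hA : 0 ≤ A := le_max_right _ _
    calc u (n + 1) ≤ f n * u n := hun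
      _ ≤ f n * (A * f n ^ n) := mul_le_mul_of_nonneg_left ih hfn.le
      _ = A * f n ^ (n + 1) := by ring
      _ ≤ A * f (n + 1) ^ (n + 1) :=
          mul_le_mul_of_nonneg_left (pow_le_pow_left₀ hfn.le (hf n.le_succ) _) hA

theorem eventually_le_div_pow_of_tendsto {M : ℕ → ℝ} (hpos : ∀ n, 0 < M n)
    (hgrow : Tendsto (fun n : ℕ => (n : ℝ) ^ 2 * M n / M (n + 1)) atTop atTop)
    {C : ℝ} (hC : 0 < C) :
    ∀ᶠ n : ℕ in atTop, M n ≤ ((n : ℝ) / C) ^ (2 * n) := by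
  have hrec : ∀ᶠ k : ℕ in atTop, M (k + 1) ≤ ((k : ℝ) / (2 * C)) ^ 2 * M k := by
    filter_upwards [hgrow.eventually_ge_atTop ((2 * C) ^ 2)] with k hk
    rw [le_div_iff₀ (hpos _)] at hk
    rw [div_pow, div_mul_eq_mul_div, le_div_iff₀ (by positivity)]
    linarith
  have hmono : Monotone fun k : ℕ => ((k : ℝ) / (2 * C)) ^ 2 := fun a b hab => by
    dsimp only
    gcongr
  have hf0 : ∀ᶠ k : ℕ in atTop, 0 < ((k : ℝ) / (2 * C)) ^ 2 := by
    filter_upwards [eventually_ge_atTop 1] with k hk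
    have : (0 : ℝ) < k := by exact_mod_cast hk
    positivity
  obtain ⟨A, hA⟩ := exists_eventually_le_mul_pow hmono hf0 hrec
  have hsmall : ∀ᶠ n : ℕ in atTop, A * (1 / 4 : ℝ) ^ n ≤ 1 := by
    have := (tendsto_pow_atTop_nhds_zero_of_lt_one (by norm_num : (0 : ℝ) ≤ 1 / 4)
      (by norm_num)).const_mul A
    rw [mul_zero] at this
    exact this.eventually (eventually_le_nhds one_pos)
  filter_upwards [hA, hsmall] with n hn hs
  calc M n ≤ A * (((n : ℝ) / (2 * C)) ^ 2) ^ n := hn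
    _ = A * (1 / 4 : ℝ) ^ n * ((n : ℝ) / C) ^ (2 * n) := by
        rw [pow_mul, mul_assoc, ← mul_pow]
        congr 2
        field_simp
        ring
    _ ≤ ((n : ℝ) / C) ^ (2 * n) := mul_le_of_le_one_left (by positivity) hs

theorem le_mul_one_div_rpow_of_le_div_pow {T m : ℝ} {n : ℕ} (hT : 0 < T) (hn : n ≠ 0)
    (hm : 0 < m) (h : m ≤ ((n : ℝ) / T) ^ (2 * n)) :
    T ≤ (n : ℝ) * (1 / m) ^ (1 / (2 * (n : ℝ))) := by
  have hn' : (0 : ℝ) < n := by exact_mod_cast Nat.pos_of_ne_zero hn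
  have hexp : 1 / (2 * (n : ℝ)) = ((2 * n : ℕ) : ℝ)⁻¹ := by push_cast; rw [one_div]
  have hpow : ((T / n) ^ (2 * n)) ≤ 1 / m := by
    rw [le_one_div (by positivity) hm, one_div, ← inv_pow, inv_div]
    exact h
  have : T / n ≤ (1 / m) ^ (1 / (2 * (n : ℝ))) := by
    calc T / n = ((T / n) ^ (2 * n)) ^ (((2 * n : ℕ) : ℝ)⁻¹) :=
          (pow_rpow_inv_natCast (by positivity) (by omega)).symm
      _ ≤ (1 / m) ^ (1 / (2 * (n : ℝ))) := by
          rw [hexp]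
          exact rpow_le_rpow (by positivity) hpow (by positivity)
  rwa [div_le_iff₀' hn'] at this

theorem half_le_entireOrder {M : ℕ → ℝ}
    (hlow : ∀ᶠ n : ℕ in atTop, (n : ℝ) * log n ≤ 2 * log (M n))
    (hup : ∀ᶠ n : ℕ in atTop, log (M n) ≤ 2 * ((n : ℝ) * log n)) :
    1 / 2 ≤ entireOrder M := by
  have hlogM : ∀ᶠ n : ℕ in atTop, 0 < (n : ℝ) * log n ∧ 0 < log (M n) := by
    filter_upwards [hlow, eventually_ge_atTop 2] with n hn hn2
    have h1 : (1 : ℝ) < n := by exact_mod_cast hn2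
    have : 0 < (n : ℝ) * log n := mul_pos (by linarith) (log_pos h1)
    exact ⟨this, by linarith⟩
  have hbdd : ∀ᶠ n : ℕ in atTop, (n : ℝ) * log n / log (M n) ≤ 2 := by
    filter_upwards [hlow, hlogM] with n hn hlog
    rw [div_le_iff₀ hlog.2]
    linarith
  have hhalf : ∀ᶠ n : ℕ in atTop, 1 / 2 ≤ (n : ℝ) * log n / log (M n) := by
    filter_upwards [hup, hlogM] with n hn hlog
    rw [le_div_iff₀ hlog.2]
    linarith
  exact le_limsup_of_frequently_le hhalf.frequently (isBoundedUnder_of_eventually_le hbdd)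

theorem order_gt_half_or_infinite_type_general
    (M : ℕ → ℝ) (hpos : ∀ n, 0 < M n)
    (hbin : ∀ n m : ℕ, (((n + m).choose n : ℕ) : ℝ) * M n * M m ≤ M (n + m))
    (hgrow : Tendsto (fun n : ℕ => (n : ℝ) ^ 2 * M n / M (n + 1)) atTop atTop) :
    1 / 2 < entireOrder M ∨
    (entireOrder M = 1 / 2 ∧
      ∀ T : ℝ, ∃ᶠ n : ℕ in atTop, T ≤ (n : ℝ) * (1 / M n) ^ (1 / (2 * (n : ℝ)))) := by
  have hrec (n : ℕ) : ((n : ℝ) + 1) * M n * M 1 ≤ M (n + 1) := by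
    simpa [Nat.choose_succ_self_right] using hbin n 1
  have hlow := eventually_mul_log_le_two_mul_log (hpos 1) (hpos 0)
    (factorial_mul_pow_mul_le (hpos 1).le hrec)
  have hup : ∀ᶠ n : ℕ in atTop, log (M n) ≤ 2 * ((n : ℝ) * log n) := by
    filter_upwards [eventually_le_div_pow_of_tendsto hpos hgrow one_pos] with n hn
    have := log_le_log (hpos n) hn
    rw [div_one, log_pow] at this
    push_cast at this
    linarith
  have htype (T : ℝ) : ∀ᶠ n : ℕ in atTop, T ≤ (n : ℝ) * (1 / M n) ^ (1 / (2 * (n : ℝ))) := by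
    rcases le_or_gt T 0 with hT | hT
    · exact Eventually.of_forall fun n => hT.trans (by have := hpos n; positivity)
    · filter_upwards [eventually_le_div_pow_of_tendsto hpos hgrow hT, eventually_ne_atTop 0]
        with n hn hn0
      exact le_mul_one_div_rpow_of_le_div_pow hT hn0 (hpos n) hn
  rcases (half_le_entireOrder hlow hup).lt_or_eq with hlt | heq
  · exact Or.inl hlt
  · exact Or.inr ⟨heq.symm, fun T => (htype T).frequently⟩

theorem order_gt_half_or_infinite_type
    (M : ℕ → ℝ) (hpos : ∀ n, 0 < M n) (hM0 : M 0 = 1)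
    (hbin : ∀ n m : ℕ, (((n + m).choose n : ℕ) : ℝ) * M n * M m ≤ M (n + m))
    (hgrow : Tendsto (fun n : ℕ => (n : ℝ) ^ 2 * M n / M (n + 1)) atTop atTop) :
    1 / 2 < entireOrder M ∨
    (entireOrder M = 1 / 2 ∧
      ∀ T : ℝ, ∃ᶠ n : ℕ in atTop, T ≤ (n : ℝ) * (1 / M n) ^ (1 / (2 * (n : ℝ)))) :=
  order_gt_half_or_infinite_type_general M hpos hbin hgrow
end

section
/- Let φ : [0,1] → [0,1] be differentiable with φ(x₀) = x₀ and suppose that for some sequence n_k → ∞ and some g ∈ C¹([0,1]) and positive reals c_k, the functions φ_{n_k+1}/c_k converge to g in C¹ norm (uniform convergence of the functions and their derivatives), where φ_n denotes the n-th iterate, φ_n(x) → x₀ for all x ∈ [0,1], x₀ ≠ 0, and 1/c_k → g(x₀)/x₀ ≠ 0. If additionally |φ'(x₀)| ≥ 1, this leads to a contradiction: g must be constant with g'(x₀) = 0, yet |(φ_{n_k+1})'(x₀)/c_k| ≥ 1/c_k → g(x₀)/x₀ > 0. -/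
/-!
Both uniform limits are evaluated pointwise. Since `φ^[n] x → x₀` and `1 / c k → g x₀ / x₀`, the
`C⁰` limit gives `g x = x₀ · g x₀ / x₀ = g x₀` on `[0,1]`, so `g' x₀ = 0`, and the `C¹` limit
gives `(φ^[n_k+1])' x₀ / c k → 0`. By the chain rule at the fixed point this derivative is
`φ'(x₀)^(n_k+1)`, of absolute value at least `1`, so `1 / c k → 0`, contradicting
`g x₀ / x₀ ≠ 0`.
-/

open Filter Topology

theorem ContDiff.iterate {𝕜 E : Type*} [NontriviallyNormedField 𝕜] [NormedAddCommGroup E]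
    [NormedSpace 𝕜 E] {n : WithTop ℕ∞} {f : E → E} (hf : ContDiff 𝕜 n f) :
    ∀ m : ℕ, ContDiff 𝕜 n f^[m]
  | 0 => contDiff_id
  | m + 1 => by
    rw [Function.iterate_succ']
    exact hf.comp (hf.iterate m)

theorem one_le_abs_deriv_iterate_of_fixedPt {f : ℝ → ℝ} {x : ℝ} (hf : DifferentiableAt ℝ f x)
    (hx : f x = x) (h : 1 ≤ |deriv f x|) (n : ℕ) : 1 ≤ |deriv f^[n] x| := by
  rw [(HasDerivAt.iterate x hf.hasDerivAt hx n).deriv, abs_pow]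
  exact one_le_pow₀ h

theorem tendsto_of_tendsto_iSup_abs_sub {X ι : Type*} [TopologicalSpace X] {s : Set X}
    (hs : IsCompact s) {l : Filter ι} {F : ι → X → ℝ} {G : X → ℝ}
    (hF : ∀ k, ContinuousOn (F k) s) (hG : ContinuousOn G s)
    (h : Tendsto (fun k => ⨆ x : s, |F k x - G x|) l (𝓝 0)) {x : X} (hx : x ∈ s) :
    Tendsto (fun k => F k x) l (𝓝 (G x)) := by
  have hle : ∀ k, ‖F k x - G x‖ ≤ ⨆ y : s, |F k y - G y| := fun k => by
    have hbdd := hs.bddAbove_image ((hF k).sub hG).abs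
    rw [Set.image_eq_range] at hbdd
    exact le_ciSup hbdd ⟨x, hx⟩
  simpa using (squeeze_zero_norm hle h).add_const (G x)

theorem deriv_eq_zero_of_eqOn_const {𝕜 F : Type*} [NontriviallyNormedField 𝕜]
    [NormedAddCommGroup F] [NormedSpace 𝕜 F] {g : 𝕜 → F} {s : Set 𝕜} {x₀ : 𝕜}
    (hs : UniqueDiffWithinAt 𝕜 s x₀) (hx₀ : x₀ ∈ s) (hg : DifferentiableAt 𝕜 g x₀)
    (hconst : ∀ x ∈ s, g x = g x₀) : deriv g x₀ = 0 :=
  hs.eq_deriv s hg.hasDerivAt.hasDerivWithinAt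
    ((hasDerivWithinAt_const x₀ s (g x₀)).congr hconst (hconst x₀ hx₀))

theorem iterate_normalization_contradiction_general
    (φ : ℝ → ℝ) (hφ : ContDiff ℝ 1 φ)
    (x₀ : ℝ) (hx₀ : x₀ ∈ Set.Icc (0 : ℝ) 1) (hfix : φ x₀ = x₀) (hx₀ne : x₀ ≠ 0)
    (hiter : ∀ x ∈ Set.Icc (0 : ℝ) 1,
      Tendsto (fun n : ℕ => φ^[n] x) atTop (nhds x₀))
    (nk : ℕ → ℕ) (hnk : Tendsto nk atTop atTop)
    (c : ℕ → ℝ) (hc : ∀ k, 0 < c k)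
    (g : ℝ → ℝ) (hg : ContDiff ℝ 1 g)
    (hC0 : Tendsto (fun k : ℕ =>
        ⨆ x : Set.Icc (0 : ℝ) 1, |φ^[nk k + 1] x / c k - g x|) atTop (nhds 0))
    (hC1 : Tendsto (fun k : ℕ =>
        ⨆ x : Set.Icc (0 : ℝ) 1, |deriv (φ^[nk k + 1]) x / c k - deriv g x|)
      atTop (nhds 0))
    (hclim : Tendsto (fun k : ℕ => 1 / c k) atTop (nhds (g x₀ / x₀)))
    (hgx₀ : g x₀ / x₀ ≠ 0)
    (hd : 1 ≤ |deriv φ x₀|) :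
    False := by
  have hconst : ∀ x ∈ Set.Icc (0 : ℝ) 1, g x = g x₀ := fun x hx => by
    have hlim := ((hiter x hx).comp ((tendsto_add_atTop_nat 1).comp hnk)).mul hclim
    rw [mul_div_cancel₀ _ hx₀ne] at hlim
    refine tendsto_nhds_unique ?_ (hlim.congr fun k => mul_one_div _ _)
    exact tendsto_of_tendsto_iSup_abs_sub isCompact_Icc
      (fun k => ((hφ.continuous.iterate _).div_const _).continuousOn) hg.continuous.continuousOn
      hC0 hx
  have hg'x₀ : deriv g x₀ = 0 :=
    deriv_eq_zero_of_eqOn_const ((uniqueDiffOn_Icc zero_lt_one) x₀ hx₀)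
      hx₀ (hg.differentiable one_ne_zero x₀) hconst
  have hderiv : Tendsto (fun k => deriv (φ^[nk k + 1]) x₀ / c k) atTop (𝓝 0) := by
    rw [← hg'x₀]
    exact tendsto_of_tendsto_iSup_abs_sub isCompact_Icc
      (fun k => (((hφ.iterate _).continuous_deriv le_rfl).div_const _).continuousOn)
      (hg.continuous_deriv le_rfl).continuousOn hC1 hx₀
  have hlb : ∀ k, 1 / c k ≤ |deriv (φ^[nk k + 1]) x₀ / c k| := fun k => by
    rw [abs_div, abs_of_pos (hc k)]
    exact div_le_div_of_nonneg_right
      (one_le_abs_deriv_iterate_of_fixedPt (hφ.differentiable one_ne_zero x₀) hfix hd _) (hc k).le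
  have hinv : Tendsto (fun k => 1 / c k) atTop (𝓝 0) :=
    squeeze_zero (fun k => (one_div_pos.2 (hc k)).le) hlb (by simpa using hderiv.abs)
  exact hgx₀ (tendsto_nhds_unique hclim hinv)

theorem iterate_normalization_contradiction
    (φ : ℝ → ℝ) (hφ : ContDiff ℝ 1 φ)
    (hmap : Set.MapsTo φ (Set.Icc 0 1) (Set.Icc 0 1))
    (x₀ : ℝ) (hx₀ : x₀ ∈ Set.Icc (0 : ℝ) 1) (hfix : φ x₀ = x₀) (hx₀ne : x₀ ≠ 0)
    (hiter : ∀ x ∈ Set.Icc (0 : ℝ) 1,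
      Tendsto (fun n : ℕ => φ^[n] x) atTop (nhds x₀))
    (nk : ℕ → ℕ) (hnk : Tendsto nk atTop atTop)
    (c : ℕ → ℝ) (hc : ∀ k, 0 < c k)
    (g : ℝ → ℝ) (hg : ContDiff ℝ 1 g)
    (hC0 : Tendsto (fun k : ℕ =>
        ⨆ x : Set.Icc (0 : ℝ) 1, |φ^[nk k + 1] x / c k - g x|) atTop (nhds 0))
    (hC1 : Tendsto (fun k : ℕ =>
        ⨆ x : Set.Icc (0 : ℝ) 1, |deriv (φ^[nk k + 1]) x / c k - deriv g x|)
      atTop (nhds 0))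
    (hclim : Tendsto (fun k : ℕ => 1 / c k) atTop (nhds (g x₀ / x₀)))
    (hgx₀ : g x₀ / x₀ ≠ 0)
    (hd : 1 ≤ |deriv φ x₀|) :
    False :=
  iterate_normalization_contradiction_general φ hφ x₀ hx₀ hfix hx₀ne hiter nk hnk c hc g hg hC0 hC1
    hclim hgx₀ hd
end
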